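/- arXiv:2210.06669 — 4 statements merged into one kernel-verified Lean document; each statement's English description precedes it below -/
import Mathlib

section
/- Let A¹,…,A^N be Hilbert–Schmidt tensors and let C be formed by contracting some collection of pairs of their legs, such that no pair of contracted legs belongs to the same tensor (no self-contraction). Then C is Hilbert–Schmidt and ‖C‖ ≤ ∏_{i=1}^N ‖Aⁱ‖. -/
open scoped ENNReal NNReal
open Finset

namespace StmtAux

lemma rpow_half_sq (x : ℝ≥0∞) : (x ^ (2⁻¹ : ℝ)) ^ 2 = x := by
  rw [← ENNReal.rpow_natCast (x ^ (2⁻¹ : ℝ)) 2, ← ENNReal.rpow_mul]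
  norm_num

/-- Cauchy–Schwarz for `tsum` in `ℝ≥0∞`. -/
lemma tsum_mul_le {ι : Type*} (f g : ι → ℝ≥0∞) :
    ∑' i, f i * g i ≤ (∑' i, f i ^ 2) ^ (2⁻¹ : ℝ) * (∑' i, g i ^ 2) ^ (2⁻¹ : ℝ) := by
  rw [ENNReal.tsum_eq_iSup_sum]
  refine iSup_le fun s => ?_
  have hpq : (2 : ℝ).HolderConjugate 2 := by constructor <;> norm_num
  calc ∑ i ∈ s, f i * g i
      ≤ (∑ i ∈ s, f i ^ (2:ℝ)) ^ (1/(2:ℝ)) * (∑ i ∈ s, g i ^ (2:ℝ)) ^ (1/(2:ℝ)) :=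
        ENNReal.inner_le_Lp_mul_Lq s f g hpq
    _ ≤ (∑' i, f i ^ 2) ^ (2⁻¹ : ℝ) * (∑' i, g i ^ 2) ^ (2⁻¹ : ℝ) := by
        rw [one_div]
        have key : ∀ h : ι → ℝ≥0∞, (∑ i ∈ s, h i ^ (2:ℝ)) ≤ ∑' i, h i ^ 2 := by
          intro h
          refine le_trans (le_of_eq ?_) (ENNReal.sum_le_tsum s)
          refine Finset.sum_congr rfl fun i _ => ?_
          rw [← ENNReal.rpow_natCast]
          norm_num
        exact mul_le_mul' (ENNReal.rpow_le_rpow (key f) (by norm_num))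
          (ENNReal.rpow_le_rpow (key g) (by norm_num))

lemma prod_split {ι M : Type*} [Fintype ι] [DecidableEq ι] [CommMonoid M] (i₀ : ι) (f : ι → M) :
    ∏ i, f i = f i₀ * ∏ j : {j // j ≠ i₀}, f j.1 := by
  rw [← Finset.mul_prod_erase univ f (mem_univ i₀)]
  congr 1
  rw [← Finset.prod_subtype (univ.erase i₀) (fun x => by simp [Finset.mem_erase]) (fun j => f j)]

/-- A `tsum` over a finite product of index sets of a product of functions of the
coordinates factors as the product of the `tsum`s. -/
lemma tsum_pi_prod : ∀ (m : ℕ) (ι : Type u) [Fintype ι], Fintype.card ι = m →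
    ∀ {F : ι → Type v} (g : ∀ i, F i → ℝ≥0∞),
    ∑' x : ∀ i, F i, ∏ i, g i (x i) = ∏ i, ∑' y, g i y := by
  intro m
  induction m with
  | zero =>
    intro ι _ hcard F g
    haveI : IsEmpty ι := Fintype.card_eq_zero_iff.mp hcard
    haveI : Unique (∀ i, F i) := Pi.uniqueOfIsEmpty F
    rw [Finset.univ_eq_empty, Finset.prod_empty]
    rw [tsum_eq_single (default : ∀ i, F i)
      (fun b hb => absurd (Subsingleton.elim b default) hb)]
    simp
  | succ m ih =>
    intro ι _ hcard F g
    classical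
    have hpos : 0 < Fintype.card ι := by omega
    obtain ⟨i₀⟩ := Fintype.card_pos_iff.mp hpos
    have hcard' : Fintype.card {j // j ≠ i₀} = m := by
      have h1 : Fintype.card {j : ι // j = i₀} = 1 := Fintype.card_subtype_eq i₀
      have := Fintype.card_subtype_compl (fun j : ι => j = i₀)
      rw [h1, hcard] at this
      simpa using this
    calc ∑' x : ∀ i, F i, ∏ i, g i (x i)
        = ∑' p : F i₀ × (∀ j : {j // j ≠ i₀}, F j.1), ∏ i, g i ((Equiv.piSplitAt i₀ F).symm p i) := by
          rw [← (Equiv.piSplitAt i₀ F).symm.tsum_eq (fun x => ∏ i, g i (x i))]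
      _ = ∑' p : F i₀ × (∀ j : {j // j ≠ i₀}, F j.1),
            g i₀ p.1 * ∏ j : {j // j ≠ i₀}, g j.1 (p.2 j) := by
          refine tsum_congr fun p => ?_
          rw [prod_split i₀]
          congr 1
          · congr 1
            simp [Equiv.piSplitAt]
          · refine Finset.prod_congr rfl fun j _ => ?_
            congr 1
            simp [Equiv.piSplitAt, j.2]
      _ = (∑' y, g i₀ y) * ∑' z : (∀ j : {j // j ≠ i₀}, F j.1), ∏ j : {j // j ≠ i₀}, g j.1 (z j) := by
          rw [ENNReal.tsum_prod']
          simp_rw [ENNReal.tsum_mul_left, ENNReal.tsum_mul_right]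
      _ = ∏ i, ∑' y, g i y := by
          rw [ih {j // j ≠ i₀} hcard' (fun j => g j.1), prod_split i₀ (fun i => ∑' y, g i y)]



section Legs

variable {ι : Type u} {Bond : Type ub} {K : Bond → Type uk} {T : ι → Bond → Prop} {β₀ : Bond}

/-- Reindexing the legs of a tensor not touching the removed bond. -/
def legEquiv (i : ι) (h : ¬ T i β₀) :
    (∀ β : {β : Bond // T i β}, K β.1) ≃
      (∀ β' : {β' : {β : Bond // β ≠ β₀} // T i β'.1}, K β'.1.1) where
  toFun l β' := l ⟨β'.1.1, β'.2⟩
  invFun l' β := l' ⟨⟨β.1, fun hβ => h (hβ ▸ β.2)⟩, β.2⟩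
  left_inv l := rfl
  right_inv l' := rfl

/-- Splitting off the leg along the removed bond, for a tensor touching it. -/
def splitLegs [DecidableEq Bond] (i : ι) (h : T i β₀) :
    (∀ β : {β : Bond // T i β}, K β.1) ≃
      K β₀ × (∀ β' : {β' : {β : Bond // β ≠ β₀} // T i β'.1}, K β'.1.1) where
  toFun l := (l ⟨β₀, h⟩, fun β' => l ⟨β'.1.1, β'.2⟩)
  invFun p β := if hβ : β.1 = β₀ then hβ.symm.rec p.1 else p.2 ⟨⟨β.1, hβ⟩, β.2⟩
  left_inv l := by
    funext β
    obtain ⟨b, hb⟩ := β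
    by_cases hβ : b = β₀
    · subst hβ; simp
    · simp [hβ]
  right_inv p := by
    refine Prod.ext ?_ (funext fun β' => ?_)
    · simp
    · simp [β'.1.2]

end Legs




lemma mainE {ι : Type u} [Fintype ι] {F : ι → Type uf} :
    ∀ (m : ℕ) (Bond : Type ub) [Fintype Bond] (K : Bond → Type uk) (T : ι → Bond → Prop),
    Fintype.card Bond = m →
    (∀ β : Bond, ∃ n₁ n₂ : ι, n₁ ≠ n₂ ∧ ∀ n, T n β ↔ n = n₁ ∨ n = n₂) →
    ∀ (a : ∀ i, F i × (∀ β : {β : Bond // T i β}, K β.1) → ℝ≥0∞),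
    ∑' x : ∀ i, F i, (∑' k : ∀ β : Bond, K β, ∏ i, a i (x i, fun β => k β.1)) ^ 2
      ≤ ∏ i, ∑' y, (a i y) ^ 2 := by
  intro m
  induction m with
  | zero =>
    intro Bond _ K T hcard htouch a
    haveI : IsEmpty Bond := Fintype.card_eq_zero_iff.mp hcard
    haveI : Unique (∀ β : Bond, K β) := Pi.uniqueOfIsEmpty K
    refine le_of_eq ?_
    -- the canonical (empty) leg assignment of tensor `i`
    set dfl : ∀ i, (∀ β : {β : Bond // T i β}, K β.1) :=
      fun i β => (IsEmpty.false β.1).elim with hdfl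
    calc ∑' x : ∀ i, F i, (∑' k : ∀ β : Bond, K β, ∏ i, a i (x i, fun β => k β.1)) ^ 2
        = ∑' x : ∀ i, F i, ∏ i, (a i (x i, dfl i)) ^ 2 := by
          refine tsum_congr fun x => ?_
          rw [tsum_eq_single (default : ∀ β : Bond, K β)
            (fun b hb => absurd (Subsingleton.elim b default) hb), ← Finset.prod_pow]
          exact Finset.prod_congr rfl fun i _ =>
            congrArg (fun t => (a i (x i, t)) ^ 2) (funext fun β => (IsEmpty.false β.1).elim)
      _ = ∏ i, ∑' y : F i, (a i (y, dfl i)) ^ 2 :=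
          tsum_pi_prod (Fintype.card ι) ι rfl (fun i y => (a i (y, dfl i)) ^ 2)
      _ = ∏ i, ∑' y, (a i y) ^ 2 :=
          Finset.prod_congr rfl fun i _ =>
            Equiv.tsum_eq (⟨fun y => (y, dfl i), fun z => z.1, fun y => rfl,
              fun z => Prod.ext rfl (funext fun β => (IsEmpty.false β.1).elim)⟩ :
              F i ≃ (F i × (∀ β : {β : Bond // T i β}, K β.1)))
              (fun z => (a i z) ^ 2)
  | succ m ih =>
    intro Bond _ K T hcard htouch a
    classical
    obtain ⟨β₀⟩ : Nonempty Bond := Fintype.card_pos_iff.mp (by omega)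
    obtain ⟨n₁, n₂, hne, hiff⟩ := htouch β₀
    have hT₁ : T n₁ β₀ := (hiff n₁).mpr (Or.inl rfl)
    have hT₂ : T n₂ β₀ := (hiff n₂).mpr (Or.inr rfl)
    have hnotT : ∀ i, i ≠ n₁ → i ≠ n₂ → ¬ T i β₀ := fun i h1 h2 hT =>
      ((hiff i).mp hT).elim h1 h2
    have hcard' : Fintype.card {β : Bond // β ≠ β₀} = m := by
      have h1 : Fintype.card {β : Bond // β = β₀} = 1 := Fintype.card_subtype_eq β₀
      have := Fintype.card_subtype_compl (fun β : Bond => β = β₀)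
      rw [h1, hcard] at this
      simpa using this
    -- the contracted tensors
    set a' : ∀ i, F i × (∀ β' : {β' : {β : Bond // β ≠ β₀} // T i β'.1}, K β'.1.1) → ℝ≥0∞ :=
      fun i z => if h : T i β₀ then
          (∑' κ : K β₀, (a i (z.1, (splitLegs i h).symm (κ, z.2))) ^ 2) ^ (2⁻¹ : ℝ)
        else a i (z.1, (legEquiv i h).symm z.2) with ha'
    have ha'pos : ∀ i (h : T i β₀) (z : F i × (∀ β' : {β' : {β : Bond // β ≠ β₀} // T i β'.1}, K β'.1.1)), a' i z =
        (∑' κ : K β₀, (a i (z.1, (splitLegs i h).symm (κ, z.2))) ^ 2) ^ (2⁻¹ : ℝ) := by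
      intro i h z
      simp only [ha']
      rw [dif_pos h]
    have ha'neg : ∀ i (h : ¬ T i β₀) (z : F i × (∀ β' : {β' : {β : Bond // β ≠ β₀} // T i β'.1}, K β'.1.1)), a' i z = a i (z.1, (legEquiv i h).symm z.2) := by
      intro i h z
      simp only [ha']
      rw [dif_neg h]
    have hnorm : ∀ i, (∑' z : F i × (∀ β' : {β' : {β : Bond // β ≠ β₀} // T i β'.1}, K β'.1.1),
        (a' i z) ^ 2) = ∑' y, (a i y) ^ 2 := by
      intro i
      by_cases h : T i β₀
      · calc (∑' z, (a' i z) ^ 2)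
            = ∑' z : F i × (∀ β' : {β' : {β : Bond // β ≠ β₀} // T i β'.1}, K β'.1.1),
                ∑' κ : K β₀, (a i (z.1, (splitLegs i h).symm (κ, z.2))) ^ 2 := by
              refine tsum_congr fun z => ?_
              rw [ha'pos i h, rpow_half_sq]
          _ = ∑' p : (F i × (∀ β' : {β' : {β : Bond // β ≠ β₀} // T i β'.1}, K β'.1.1)) × K β₀,
                (a i (p.1.1, (splitLegs i h).symm (p.2, p.1.2))) ^ 2 :=
              (ENNReal.tsum_prod' (f := fun p :
                  (F i × (∀ β' : {β' : {β : Bond // β ≠ β₀} // T i β'.1}, K β'.1.1)) × K β₀ =>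
                (a i (p.1.1, (splitLegs i h).symm (p.2, p.1.2))) ^ 2)).symm
          _ = ∑' y, (a i y) ^ 2 := by
              refine Equiv.tsum_eq ((Equiv.prodAssoc _ _ _).trans ((Equiv.refl (F i)).prodCongr
                ((Equiv.prodComm _ _).trans (splitLegs i h).symm))) (fun y => (a i y) ^ 2)
      · calc (∑' z, (a' i z) ^ 2)
            = ∑' z : F i × (∀ β' : {β' : {β : Bond // β ≠ β₀} // T i β'.1}, K β'.1.1),
                (a i (z.1, (legEquiv i h).symm z.2)) ^ 2 := by
              refine tsum_congr fun z => ?_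
              rw [ha'neg i h]
          _ = ∑' y, (a i y) ^ 2 :=
              Equiv.tsum_eq ((Equiv.refl (F i)).prodCongr (legEquiv i h).symm)
                (fun y => (a i y) ^ 2)
    have hpoint : ∀ x : ∀ i, F i,
        (∑' k : ∀ β : Bond, K β, ∏ i, a i (x i, fun β => k β.1))
          ≤ ∑' k' : ∀ β' : {β : Bond // β ≠ β₀}, K β'.1,
              ∏ i, a' i (x i, fun β' => k' β'.1) := by
      intro x
      rw [← Equiv.tsum_eq (Equiv.piSplitAt β₀ K).symm
        (fun k => ∏ i, a i (x i, fun β => k β.1)), ENNReal.tsum_prod', ENNReal.tsum_comm]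
      refine ENNReal.tsum_le_tsum fun k' => ?_
      have hfacN : ∀ (κ : K β₀) i (h : ¬ T i β₀),
          a i (x i, fun β => (Equiv.piSplitAt β₀ K).symm (κ, k') β.1)
            = a' i (x i, fun β' => k' β'.1) := by
        intro κ i h
        rw [ha'neg i h]
        refine congrArg (fun t => a i (x i, t)) (funext fun β => ?_)
        have hβ : β.1 ≠ β₀ := fun hβ => h (hβ ▸ β.2)
        simp [Equiv.piSplitAt, legEquiv, hβ]
      have hfacT : ∀ (κ : K β₀) i (h : T i β₀),
          a i (x i, fun β => (Equiv.piSplitAt β₀ K).symm (κ, k') β.1)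
            = a i (x i, (splitLegs i h).symm (κ, fun β' => k' β'.1)) := by
        intro κ i h
        rfl
      have hn₂ : n₂ ∈ univ.erase n₁ := Finset.mem_erase.mpr ⟨Ne.symm hne, mem_univ n₂⟩
      calc ∑' κ : K β₀, ∏ i, a i (x i, fun β => (Equiv.piSplitAt β₀ K).symm (κ, k') β.1)
          = ∑' κ : K β₀,
              (a n₁ (x n₁, (splitLegs n₁ hT₁).symm (κ, fun β' => k' β'.1)) *
                a n₂ (x n₂, (splitLegs n₂ hT₂).symm (κ, fun β' => k' β'.1))) *
              ∏ i ∈ (univ.erase n₁).erase n₂, a' i (x i, fun β' => k' β'.1) := by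
            refine tsum_congr fun κ => ?_
            rw [← Finset.mul_prod_erase univ _ (mem_univ n₁),
              ← Finset.mul_prod_erase _ _ hn₂, ← mul_assoc,
              hfacT κ n₁ hT₁, hfacT κ n₂ hT₂]
            refine congrArg _ (Finset.prod_congr rfl fun i hi => ?_)
            obtain ⟨hi2, hi1⟩ : i ≠ n₂ ∧ i ≠ n₁ := by
              simpa [Finset.mem_erase] using hi
            exact hfacN κ i (hnotT i hi1 hi2)
        _ = (∑' κ : K β₀,
              a n₁ (x n₁, (splitLegs n₁ hT₁).symm (κ, fun β' => k' β'.1)) *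
                a n₂ (x n₂, (splitLegs n₂ hT₂).symm (κ, fun β' => k' β'.1))) *
              ∏ i ∈ (univ.erase n₁).erase n₂, a' i (x i, fun β' => k' β'.1) :=
            ENNReal.tsum_mul_right
        _ ≤ ((∑' κ : K β₀,
                (a n₁ (x n₁, (splitLegs n₁ hT₁).symm (κ, fun β' => k' β'.1))) ^ 2) ^ (2⁻¹ : ℝ) *
              (∑' κ : K β₀,
                (a n₂ (x n₂, (splitLegs n₂ hT₂).symm (κ, fun β' => k' β'.1))) ^ 2) ^ (2⁻¹ : ℝ)) *
              ∏ i ∈ (univ.erase n₁).erase n₂, a' i (x i, fun β' => k' β'.1) :=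
            mul_le_mul_left (tsum_mul_le _ _) _
        _ = ∏ i, a' i (x i, fun β' => k' β'.1) := by
            rw [← Finset.mul_prod_erase univ _ (mem_univ n₁),
              ← Finset.mul_prod_erase _ _ hn₂, ← mul_assoc]
            refine congrArg (· * _) ?_
            rw [ha'pos n₁ hT₁, ha'pos n₂ hT₂]
    calc ∑' x : ∀ i, F i, (∑' k : ∀ β : Bond, K β, ∏ i, a i (x i, fun β => k β.1)) ^ 2
        ≤ ∑' x : ∀ i, F i, (∑' k' : ∀ β' : {β : Bond // β ≠ β₀}, K β'.1,
            ∏ i, a' i (x i, fun β' => k' β'.1)) ^ 2 :=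
          ENNReal.tsum_le_tsum fun x => pow_le_pow_left₀ zero_le (hpoint x) 2
      _ ≤ ∏ i, ∑' z, (a' i z) ^ 2 :=
          ih {β : Bond // β ≠ β₀} (fun β' => K β'.1) (fun i β' => T i β'.1) hcard'
            (fun β' => htouch β'.1) a'
      _ = ∏ i, ∑' y, (a i y) ^ 2 := Finset.prod_congr rfl fun i _ => hnorm i


lemma sqrt_prod {ι : Type*} (s : Finset ι) (f : ι → ℝ) (hf : ∀ i, 0 ≤ f i) :
    Real.sqrt (∏ i ∈ s, f i) = ∏ i ∈ s, Real.sqrt (f i) := by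
  induction s using Finset.cons_induction with
  | empty => simp
  | cons i s hi ih => rw [Finset.prod_cons, Finset.prod_cons, Real.sqrt_mul (hf i), ih]

end StmtAux

/-- Contraction of a collection of pairs of legs of Hilbert–Schmidt tensors
`A 0, …, A (N-1)` with no self-contractions is Hilbert–Schmidt, with norm at most
the product of the norms.  Tensor `n` has free legs grouped into the countable set
`F n` and a contracted leg for each bond `β` it touches, indexed by `K β`.  The
no-self-contraction condition says every bond touches exactly two distinct tensors. -/
theorem stmt_2 {N : ℕ} {F : Fin N → Type*} {Bond : Type*} {K : Bond → Type*}
    [∀ n, Countable (F n)] [Finite Bond] [∀ β, Countable (K β)]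
    (touch : Fin N → Bond → Prop)
    (htouch : ∀ β : Bond, ∃ n₁ n₂ : Fin N, n₁ ≠ n₂ ∧ ∀ n, touch n β ↔ n = n₁ ∨ n = n₂)
    (A : ∀ n : Fin N, F n × (∀ β : {β : Bond // touch n β}, K β.1) → ℝ)
    (hA : ∀ n, Summable fun x => (A n x) ^ 2) :
    (∀ x : ∀ n, F n, Summable fun k : ∀ β : Bond, K β =>
        ∏ n, A n (x n, fun β => k β.1)) ∧
    (Summable fun x : ∀ n, F n =>
        (∑' k : ∀ β : Bond, K β, ∏ n, A n (x n, fun β => k β.1)) ^ 2) ∧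
    Real.sqrt (∑' x : ∀ n, F n,
        (∑' k : ∀ β : Bond, K β, ∏ n, A n (x n, fun β => k β.1)) ^ 2) ≤
      ∏ n, Real.sqrt (∑' y, (A n y) ^ 2) := by
  classical
  haveI : Fintype Bond := Fintype.ofFinite Bond
  set a : ∀ n : Fin N, F n × (∀ β : {β : Bond // touch n β}, K β.1) → ℝ≥0∞ :=
    fun n y => (‖A n y‖₊ : ℝ≥0∞) with ha
  have hmain := StmtAux.mainE (Fintype.card Bond) Bond K touch rfl htouch a
  have hfac : ∀ n, (∑' y, (a n y) ^ 2) = ENNReal.ofReal (∑' y, (A n y) ^ 2) := by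
    intro n
    rw [ENNReal.ofReal_tsum_of_nonneg (fun y => sq_nonneg _) (hA n)]
    refine tsum_congr fun y => ?_
    rw [← sq_abs, ENNReal.ofReal_pow (abs_nonneg _), ← Real.enorm_eq_ofReal_abs, enorm_eq_nnnorm]
  have hProdTop : (∏ n, ∑' y, (a n y) ^ 2) ≠ ⊤ := by
    refine (ENNReal.prod_lt_top fun n _ => ?_).ne
    rw [hfac n]
    exact ENNReal.ofReal_lt_top
  have hinner : ∀ (x : ∀ n, F n) (k : ∀ β : Bond, K β),
      (∏ n, a n (x n, fun β => k β.1)) =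
        ((‖∏ n, A n (x n, fun β => k β.1)‖₊ : ℝ≥0∞)) := by
    intro x k
    rw [nnnorm_prod, ENNReal.coe_finset_prod]
  have hSx : ∀ x : ∀ n, F n,
      (∑' k : ∀ β : Bond, K β, ∏ n, a n (x n, fun β => k β.1)) ≠ ⊤ := by
    intro x
    have h2 : (∑' k : ∀ β : Bond, K β, ∏ n, a n (x n, fun β => k β.1)) ^ 2 ≠ ⊤ :=
      ne_top_of_le_ne_top hProdTop (le_trans (ENNReal.le_tsum x) hmain)
    exact fun hS => h2 (ENNReal.pow_eq_top_iff.mpr ⟨hS, two_ne_zero⟩)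
  have hnn : ∀ x : ∀ n, F n, Summable fun k : ∀ β : Bond, K β =>
      ‖∏ n, A n (x n, fun β => k β.1)‖₊ := by
    intro x
    rw [← ENNReal.tsum_coe_ne_top_iff_summable]
    exact (tsum_congr (hinner x)) ▸ hSx x
  have claim1 : ∀ x : ∀ n, F n, Summable fun k : ∀ β : Bond, K β =>
      ∏ n, A n (x n, fun β => k β.1) := fun x => (hnn x).of_nnnorm
  have habs : ∀ x : ∀ n, F n,
      ((‖∑' k : ∀ β : Bond, K β, ∏ n, A n (x n, fun β => k β.1)‖₊ : ℝ≥0∞)) ≤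
        ∑' k : ∀ β : Bond, K β, ∏ n, a n (x n, fun β => k β.1) := by
    intro x
    calc ((‖∑' k : ∀ β : Bond, K β, ∏ n, A n (x n, fun β => k β.1)‖₊ : ℝ≥0∞))
        ≤ (((∑' k : ∀ β : Bond, K β, ‖∏ n, A n (x n, fun β => k β.1)‖₊) : ℝ≥0) : ℝ≥0∞) :=
          ENNReal.coe_le_coe.mpr (nnnorm_tsum_le (hnn x))
      _ = ∑' k : ∀ β : Bond, K β, ((‖∏ n, A n (x n, fun β => k β.1)‖₊ : ℝ≥0∞)) :=
          ENNReal.coe_tsum (hnn x)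
      _ = ∑' k : ∀ β : Bond, K β, ∏ n, a n (x n, fun β => k β.1) :=
          (tsum_congr (hinner x)).symm
  have hsq : ∀ x : ∀ n, F n,
      ENNReal.ofReal ((∑' k : ∀ β : Bond, K β, ∏ n, A n (x n, fun β => k β.1)) ^ 2) ≤
        (∑' k : ∀ β : Bond, K β, ∏ n, a n (x n, fun β => k β.1)) ^ 2 := by
    intro x
    rw [← sq_abs, ENNReal.ofReal_pow (abs_nonneg _), ← Real.enorm_eq_ofReal_abs]
    exact pow_le_pow_left₀ zero_le (habs x) 2
  have claim2 : Summable fun x : ∀ n, F n =>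
      (∑' k : ∀ β : Bond, K β, ∏ n, A n (x n, fun β => k β.1)) ^ 2 := by
    refine Summable.of_nnnorm ?_
    rw [← ENNReal.tsum_coe_ne_top_iff_summable]
    refine ne_top_of_le_ne_top hProdTop (le_trans (ENNReal.tsum_le_tsum fun x => ?_) hmain)
    calc ((‖(∑' k : ∀ β : Bond, K β, ∏ n, A n (x n, fun β => k β.1)) ^ 2‖₊ : ℝ≥0∞))
        = ENNReal.ofReal ((∑' k : ∀ β : Bond, K β, ∏ n, A n (x n, fun β => k β.1)) ^ 2) := by
          rw [← enorm_eq_nnnorm, Real.enorm_eq_ofReal_abs, abs_of_nonneg (sq_nonneg _)]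
      _ ≤ (∑' k : ∀ β : Bond, K β, ∏ n, a n (x n, fun β => k β.1)) ^ 2 := hsq x
  have hR : (∑' x : ∀ n, F n,
      (∑' k : ∀ β : Bond, K β, ∏ n, A n (x n, fun β => k β.1)) ^ 2) ≤
        ∏ n, ∑' y, (A n y) ^ 2 := by
    have h0 : (0:ℝ) ≤ ∏ n, ∑' y, (A n y) ^ 2 :=
      Finset.prod_nonneg fun n _ => tsum_nonneg fun y => sq_nonneg _
    refine (ENNReal.ofReal_le_ofReal_iff h0).mp ?_
    calc ENNReal.ofReal (∑' x : ∀ n, F n,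
          (∑' k : ∀ β : Bond, K β, ∏ n, A n (x n, fun β => k β.1)) ^ 2)
        = ∑' x : ∀ n, F n, ENNReal.ofReal
            ((∑' k : ∀ β : Bond, K β, ∏ n, A n (x n, fun β => k β.1)) ^ 2) :=
          ENNReal.ofReal_tsum_of_nonneg (fun x => sq_nonneg _) claim2
      _ ≤ ∑' x : ∀ n, F n,
            (∑' k : ∀ β : Bond, K β, ∏ n, a n (x n, fun β => k β.1)) ^ 2 :=
          ENNReal.tsum_le_tsum fun x => hsq x
      _ ≤ ∏ n, ∑' y, (a n y) ^ 2 := hmain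
      _ = ENNReal.ofReal (∏ n, ∑' y, (A n y) ^ 2) := by
          rw [ENNReal.ofReal_prod_of_nonneg fun n _ => tsum_nonneg fun y => sq_nonneg _]
          exact Finset.prod_congr rfl fun n _ => hfac n
  refine ⟨claim1, claim2, ?_⟩
  rw [← StmtAux.sqrt_prod univ _ (fun n => tsum_nonneg fun y => sq_nonneg _)]
  exact Real.sqrt_le_sqrt hR
end

section
/- Let A be a Hilbert–Schmidt 4-leg tensor indexed by a countable set I, and let T be the 8-leg tensor formed by contracting four copies of A in a 2×2 square arrangement (contracting horizontal legs between horizontally adjacent copies and vertical legs between vertically adjacent copies). Then T is Hilbert–Schmidt and ‖T‖ ≤ ‖A‖⁴. -/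
open scoped BigOperators

section Aux

variable {α β γ : Type*}

/-- Summability of a pointwise product of two ℓ² families. -/
lemma summable_mul_of_sq {f g : β → ℝ} (hf : Summable fun b => f b ^ 2)
    (hg : Summable fun b => g b ^ 2) : Summable fun b => f b * g b := by
  apply Summable.of_abs
  refine Summable.of_nonneg_of_le (fun b => abs_nonneg _)
    (fun b => ?_) (((hf.add hg).div_const 2))
  have := sq_nonneg (|f b| - |g b|)
  rw [abs_mul]
  nlinarith [sq_abs (f b), sq_abs (g b)]

/-- Cauchy–Schwarz for `tsum`. -/
lemma tsum_sq_le_tsum_mul_tsum {f g : β → ℝ} (hf : Summable fun b => f b ^ 2)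
    (hg : Summable fun b => g b ^ 2) :
    (∑' b, f b * g b) ^ 2 ≤ (∑' b, f b ^ 2) * ∑' b, g b ^ 2 := by
  have hfg : Summable fun b => f b * g b := summable_mul_of_sq hf hg
  have habs : Summable fun b => |f b * g b| := hfg.abs
  have h1 : |∑' b, f b * g b| ≤ ∑' b, |f b * g b| := by
    calc |∑' b, f b * g b| = ‖∑' b, f b * g b‖ := (Real.norm_eq_abs _).symm
      _ ≤ ∑' b, ‖f b * g b‖ :=
          norm_tsum_le_tsum_norm habs
      _ = ∑' b, |f b * g b| := tsum_congr fun b => Real.norm_eq_abs _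
  have h2 : (∑' b, |f b * g b|) ≤
      Real.sqrt (∑' b, f b ^ 2) * Real.sqrt (∑' b, g b ^ 2) := by
    refine Summable.tsum_le_of_sum_le habs fun s => ?_
    calc ∑ b ∈ s, |f b * g b| = ∑ b ∈ s, |f b| * |g b| := by
          simp [abs_mul]
      _ ≤ Real.sqrt (∑ b ∈ s, |f b| ^ 2) * Real.sqrt (∑ b ∈ s, |g b| ^ 2) :=
          Real.sum_mul_le_sqrt_mul_sqrt s _ _
      _ ≤ Real.sqrt (∑' b, f b ^ 2) * Real.sqrt (∑' b, g b ^ 2) := by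
          have hle1 : ∑ b ∈ s, |f b| ^ 2 ≤ ∑' b, f b ^ 2 := by
            simpa [sq_abs] using Summable.sum_le_tsum s (fun b _ => sq_nonneg (f b)) hf
          have hle2 : ∑ b ∈ s, |g b| ^ 2 ≤ ∑' b, g b ^ 2 := by
            simpa [sq_abs] using Summable.sum_le_tsum s (fun b _ => sq_nonneg (g b)) hg
          exact mul_le_mul (Real.sqrt_le_sqrt hle1) (Real.sqrt_le_sqrt hle2)
            (Real.sqrt_nonneg _) (Real.sqrt_nonneg _)
  have h0 : (∑' b, f b * g b) ^ 2 ≤ (∑' b, |f b * g b|) ^ 2 := by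
    rw [← sq_abs (∑' b, f b * g b)]
    have hnn : (0:ℝ) ≤ |∑' b, f b * g b| := abs_nonneg _
    exact pow_le_pow_left₀ hnn h1 2
  calc (∑' b, f b * g b) ^ 2 ≤ (∑' b, |f b * g b|) ^ 2 := h0
    _ ≤ (Real.sqrt (∑' b, f b ^ 2) * Real.sqrt (∑' b, g b ^ 2)) ^ 2 := by
        have : (0:ℝ) ≤ ∑' b, |f b * g b| := tsum_nonneg fun b => abs_nonneg _
        exact pow_le_pow_left₀ this h2 2
    _ = (∑' b, f b ^ 2) * ∑' b, g b ^ 2 := by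
        rw [mul_pow, Real.sq_sqrt (tsum_nonneg fun b => sq_nonneg _),
          Real.sq_sqrt (tsum_nonneg fun b => sq_nonneg _)]

/-- Hilbert–Schmidt bound for the contraction (matrix product) of two
square-summable kernels. -/
lemma hs_contract (f : α → β → ℝ) (g : β → γ → ℝ)
    (hf : Summable fun p : α × β => f p.1 p.2 ^ 2)
    (hg : Summable fun p : β × γ => g p.1 p.2 ^ 2) :
    (∀ a c, Summable fun b => f a b * g b c) ∧
    (Summable fun p : α × γ => (∑' b, f p.1 b * g b p.2) ^ 2) ∧
    (∑' p : α × γ, (∑' b, f p.1 b * g b p.2) ^ 2) ≤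
      (∑' p : α × β, f p.1 p.2 ^ 2) * ∑' p : β × γ, g p.1 p.2 ^ 2 := by
  have hfa : ∀ a, Summable fun b => f a b ^ 2 := fun a => hf.prod_factor a
  have hg' : Summable fun p : γ × β => g p.2 p.1 ^ 2 :=
    ((Equiv.prodComm γ β).summable_iff (f := fun p : β × γ => g p.1 p.2 ^ 2)).2 hg
  have hgc : ∀ c, Summable fun b => g b c ^ 2 := fun c => hg'.prod_factor c
  have hpt : ∀ a c, Summable fun b => f a b * g b c :=
    fun a c => summable_mul_of_sq (hfa a) (hgc c)
  set F : α → ℝ := fun a => ∑' b, f a b ^ 2 with hF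
  set G : γ → ℝ := fun c => ∑' b, g b c ^ 2 with hG
  have hFs : Summable F := (hf.hasSum.prod_fiberwise fun a => (hfa a).hasSum).summable
  have hGs : Summable G := (hg'.hasSum.prod_fiberwise fun c => (hgc c).hasSum).summable
  have hFnn : ∀ a, 0 ≤ F a := fun a => tsum_nonneg fun b => sq_nonneg _
  have hGnn : ∀ c, 0 ≤ G c := fun c => tsum_nonneg fun b => sq_nonneg _
  have hbound : ∀ p : α × γ, (∑' b, f p.1 b * g b p.2) ^ 2 ≤ F p.1 * G p.2 :=
    fun p => tsum_sq_le_tsum_mul_tsum (hfa p.1) (hgc p.2)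
  have hFG : Summable fun p : α × γ => F p.1 * G p.2 :=
    hFs.mul_of_nonneg hGs hFnn hGnn
  have hsq : Summable fun p : α × γ => (∑' b, f p.1 b * g b p.2) ^ 2 :=
    Summable.of_nonneg_of_le (fun p => sq_nonneg _) hbound hFG
  refine ⟨hpt, hsq, ?_⟩
  have h1 : (∑' p : α × γ, (∑' b, f p.1 b * g b p.2) ^ 2) ≤
      ∑' p : α × γ, F p.1 * G p.2 := Summable.tsum_le_tsum hbound hsq hFG
  have h2 : (∑' p : α × γ, F p.1 * G p.2) = (∑' a, F a) * ∑' c, G c := by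
    rw [Summable.tsum_prod' hFG fun a => hGs.mul_left (F a)]
    simp_rw [tsum_mul_left, tsum_mul_right]
  have h3 : (∑' a, F a) = ∑' p : α × β, f p.1 p.2 ^ 2 :=
    (Summable.tsum_prod' hf fun a => hfa a).symm
  have h4 : (∑' c, G c) = ∑' p : β × γ, g p.1 p.2 ^ 2 := by
    have hh := (Equiv.prodComm γ β).tsum_eq (fun p : β × γ => g p.1 p.2 ^ 2)
    rw [← hh]
    exact (Summable.tsum_prod' hg' fun c => hgc c).symm
  calc (∑' p : α × γ, (∑' b, f p.1 b * g b p.2) ^ 2) ≤ ∑' p : α × γ, F p.1 * G p.2 := h1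
    _ = (∑' a, F a) * ∑' c, G c := h2
    _ = (∑' p : α × β, f p.1 p.2 ^ 2) * ∑' p : β × γ, g p.1 p.2 ^ 2 := by rw [h3, h4]

variable {I : Type*}

/-- Finite 4-fold sum bound: Cauchy–Schwarz twice. -/
lemma finite4_bound (g1 g2 g3 g4 : I → I → ℝ)
    (n1 : ∀ a c, 0 ≤ g1 a c) (n2 : ∀ a c, 0 ≤ g2 a c)
    (n3 : ∀ a c, 0 ≤ g3 a c) (n4 : ∀ a c, 0 ≤ g4 a c)
    (h1 : Summable fun p : I × I => g1 p.1 p.2 ^ 2)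
    (h2 : Summable fun p : I × I => g2 p.1 p.2 ^ 2)
    (h3 : Summable fun p : I × I => g3 p.1 p.2 ^ 2)
    (h4 : Summable fun p : I × I => g4 p.1 p.2 ^ 2)
    (sa sb sc sd : Finset I) :
    ∑ a ∈ sa, ∑ b ∈ sb, ∑ c ∈ sc, ∑ d ∈ sd,
        g1 a c * g2 a d * g3 b c * g4 b d ≤
      Real.sqrt (∑' p : I × I, g1 p.1 p.2 ^ 2) *
        Real.sqrt (∑' p : I × I, g3 p.1 p.2 ^ 2) *
        (Real.sqrt (∑' p : I × I, g2 p.1 p.2 ^ 2) *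
          Real.sqrt (∑' p : I × I, g4 p.1 p.2 ^ 2)) := by
  classical
  have sumsq_le : ∀ (g : I → I → ℝ) (hg : Summable fun p : I × I => g p.1 p.2 ^ 2)
      (s t : Finset I), ∑ c ∈ s, ∑ a ∈ t, g a c ^ 2 ≤ ∑' p : I × I, g p.1 p.2 ^ 2 := by
    intro g hg s t
    rw [Finset.sum_comm, ← Finset.sum_product']
    exact Summable.sum_le_tsum _ (fun p _ => sq_nonneg _) hg
  -- reorder the sums so that c, d are outermost
  have reorder : ∑ a ∈ sa, ∑ b ∈ sb, ∑ c ∈ sc, ∑ d ∈ sd,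
      g1 a c * g2 a d * g3 b c * g4 b d =
      ∑ c ∈ sc, ∑ d ∈ sd, ∑ a ∈ sa, ∑ b ∈ sb,
      g1 a c * g2 a d * g3 b c * g4 b d := by
    calc ∑ a ∈ sa, ∑ b ∈ sb, ∑ c ∈ sc, ∑ d ∈ sd, g1 a c * g2 a d * g3 b c * g4 b d
        = ∑ a ∈ sa, ∑ c ∈ sc, ∑ b ∈ sb, ∑ d ∈ sd, g1 a c * g2 a d * g3 b c * g4 b d :=
          Finset.sum_congr rfl fun a _ => Finset.sum_comm
      _ = ∑ c ∈ sc, ∑ a ∈ sa, ∑ b ∈ sb, ∑ d ∈ sd, g1 a c * g2 a d * g3 b c * g4 b d :=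
          Finset.sum_comm
      _ = ∑ c ∈ sc, ∑ a ∈ sa, ∑ d ∈ sd, ∑ b ∈ sb, g1 a c * g2 a d * g3 b c * g4 b d :=
          Finset.sum_congr rfl fun c _ =>
            Finset.sum_congr rfl fun a _ => Finset.sum_comm
      _ = ∑ c ∈ sc, ∑ d ∈ sd, ∑ a ∈ sa, ∑ b ∈ sb, g1 a c * g2 a d * g3 b c * g4 b d :=
          Finset.sum_congr rfl fun c _ => Finset.sum_comm
  rw [reorder]
  have split : ∀ c d, ∑ a ∈ sa, ∑ b ∈ sb, g1 a c * g2 a d * g3 b c * g4 b d =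
      (∑ a ∈ sa, g1 a c * g2 a d) * ∑ b ∈ sb, g3 b c * g4 b d := by
    intro c d
    rw [Finset.sum_mul_sum]
    refine Finset.sum_congr rfl fun a _ => Finset.sum_congr rfl fun b _ => by ring
  simp_rw [split]
  set U : I → ℝ := fun c => ∑ a ∈ sa, g1 a c ^ 2 with hU
  set V : I → ℝ := fun d => ∑ a ∈ sa, g2 a d ^ 2 with hV
  set U' : I → ℝ := fun c => ∑ b ∈ sb, g3 b c ^ 2 with hU'
  set V' : I → ℝ := fun d => ∑ b ∈ sb, g4 b d ^ 2 with hV'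
  have hUnn : ∀ c, 0 ≤ U c := fun c => Finset.sum_nonneg fun a _ => sq_nonneg _
  have hVnn : ∀ d, 0 ≤ V d := fun d => Finset.sum_nonneg fun a _ => sq_nonneg _
  have hU'nn : ∀ c, 0 ≤ U' c := fun c => Finset.sum_nonneg fun b _ => sq_nonneg _
  have hV'nn : ∀ d, 0 ≤ V' d := fun d => Finset.sum_nonneg fun b _ => sq_nonneg _
  have step1 : ∀ c d, (∑ a ∈ sa, g1 a c * g2 a d) * ∑ b ∈ sb, g3 b c * g4 b d ≤
      Real.sqrt (U c) * Real.sqrt (V d) * (Real.sqrt (U' c) * Real.sqrt (V' d)) := by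
    intro c d
    have cs1 : ∑ a ∈ sa, g1 a c * g2 a d ≤ Real.sqrt (U c) * Real.sqrt (V d) :=
      Real.sum_mul_le_sqrt_mul_sqrt sa _ _
    have cs2 : ∑ b ∈ sb, g3 b c * g4 b d ≤ Real.sqrt (U' c) * Real.sqrt (V' d) :=
      Real.sum_mul_le_sqrt_mul_sqrt sb _ _
    have p1 : 0 ≤ ∑ a ∈ sa, g1 a c * g2 a d :=
      Finset.sum_nonneg fun a _ => mul_nonneg (n1 a c) (n2 a d)
    have p2 : 0 ≤ ∑ b ∈ sb, g3 b c * g4 b d :=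
      Finset.sum_nonneg fun b _ => mul_nonneg (n3 b c) (n4 b d)
    exact mul_le_mul cs1 cs2 p2 (mul_nonneg (Real.sqrt_nonneg _) (Real.sqrt_nonneg _))
  calc ∑ c ∈ sc, ∑ d ∈ sd, (∑ a ∈ sa, g1 a c * g2 a d) * ∑ b ∈ sb, g3 b c * g4 b d
      ≤ ∑ c ∈ sc, ∑ d ∈ sd,
          Real.sqrt (U c) * Real.sqrt (V d) * (Real.sqrt (U' c) * Real.sqrt (V' d)) := by
        refine Finset.sum_le_sum fun c _ => Finset.sum_le_sum fun d _ => step1 c d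
    _ = (∑ c ∈ sc, Real.sqrt (U c) * Real.sqrt (U' c)) *
          ∑ d ∈ sd, Real.sqrt (V d) * Real.sqrt (V' d) := by
        rw [Finset.sum_mul_sum]
        refine Finset.sum_congr rfl fun c _ => Finset.sum_congr rfl fun d _ => by ring
    _ ≤ (Real.sqrt (∑ c ∈ sc, U c) * Real.sqrt (∑ c ∈ sc, U' c)) *
          (Real.sqrt (∑ d ∈ sd, V d) * Real.sqrt (∑ d ∈ sd, V' d)) := by
        have t1 := Real.sum_sqrt_mul_sqrt_le (f := U) (g := U') sc hUnn hU'nn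
        have t2 := Real.sum_sqrt_mul_sqrt_le (f := V) (g := V') sd hVnn hV'nn
        have q1 : 0 ≤ ∑ c ∈ sc, Real.sqrt (U c) * Real.sqrt (U' c) :=
          Finset.sum_nonneg fun c _ =>
            mul_nonneg (Real.sqrt_nonneg _) (Real.sqrt_nonneg _)
        exact mul_le_mul t1 t2
          (Finset.sum_nonneg fun d _ =>
            mul_nonneg (Real.sqrt_nonneg _) (Real.sqrt_nonneg _))
          (mul_nonneg (Real.sqrt_nonneg _) (Real.sqrt_nonneg _))
    _ ≤ Real.sqrt (∑' p : I × I, g1 p.1 p.2 ^ 2) *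
          Real.sqrt (∑' p : I × I, g3 p.1 p.2 ^ 2) *
          (Real.sqrt (∑' p : I × I, g2 p.1 p.2 ^ 2) *
            Real.sqrt (∑' p : I × I, g4 p.1 p.2 ^ 2)) := by
        simp only [hU, hV, hU', hV']
        have b1 := Real.sqrt_le_sqrt (sumsq_le g1 h1 sc sa)
        have b3 := Real.sqrt_le_sqrt (sumsq_le g3 h3 sc sb)
        have b2 := Real.sqrt_le_sqrt (sumsq_le g2 h2 sd sa)
        have b4 := Real.sqrt_le_sqrt (sumsq_le g4 h4 sd sb)
        exact mul_le_mul
          (mul_le_mul b1 b3 (Real.sqrt_nonneg _) (Real.sqrt_nonneg _))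
          (mul_le_mul b2 b4 (Real.sqrt_nonneg _) (Real.sqrt_nonneg _))
          (mul_nonneg (Real.sqrt_nonneg _) (Real.sqrt_nonneg _))
          (mul_nonneg (Real.sqrt_nonneg _) (Real.sqrt_nonneg _))

/-- The joint 4-index summability for the contracted square pattern. -/
lemma master4 (g1 g2 g3 g4 : I → I → ℝ)
    (n1 : ∀ a c, 0 ≤ g1 a c) (n2 : ∀ a c, 0 ≤ g2 a c)
    (n3 : ∀ a c, 0 ≤ g3 a c) (n4 : ∀ a c, 0 ≤ g4 a c)
    (h1 : Summable fun p : I × I => g1 p.1 p.2 ^ 2)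
    (h2 : Summable fun p : I × I => g2 p.1 p.2 ^ 2)
    (h3 : Summable fun p : I × I => g3 p.1 p.2 ^ 2)
    (h4 : Summable fun p : I × I => g4 p.1 p.2 ^ 2) :
    Summable fun w : I × I × I × I =>
      g1 w.1 w.2.2.1 * g2 w.1 w.2.2.2 * g3 w.2.1 w.2.2.1 * g4 w.2.1 w.2.2.2 := by
  classical
  have nn : ∀ w : I × I × I × I,
      0 ≤ g1 w.1 w.2.2.1 * g2 w.1 w.2.2.2 * g3 w.2.1 w.2.2.1 * g4 w.2.1 w.2.2.2 :=
    fun w => mul_nonneg (mul_nonneg (mul_nonneg (n1 _ _) (n2 _ _)) (n3 _ _)) (n4 _ _)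
  refine summable_of_sum_le (c := Real.sqrt (∑' p : I × I, g1 p.1 p.2 ^ 2) *
      Real.sqrt (∑' p : I × I, g3 p.1 p.2 ^ 2) *
      (Real.sqrt (∑' p : I × I, g2 p.1 p.2 ^ 2) *
        Real.sqrt (∑' p : I × I, g4 p.1 p.2 ^ 2))) nn fun s => ?_
  set sa := s.image (fun w : I × I × I × I => w.1) with hsa
  set sb := s.image (fun w : I × I × I × I => w.2.1) with hsb
  set sc := s.image (fun w : I × I × I × I => w.2.2.1) with hsc
  set sd := s.image (fun w : I × I × I × I => w.2.2.2) with hsd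
  have hsub : s ⊆ sa ×ˢ sb ×ˢ sc ×ˢ sd := by
    intro w hw
    simp only [Finset.mem_product]
    exact ⟨Finset.mem_image_of_mem _ hw, Finset.mem_image_of_mem _ hw,
      Finset.mem_image_of_mem _ hw, Finset.mem_image_of_mem _ hw⟩
  calc ∑ w ∈ s, g1 w.1 w.2.2.1 * g2 w.1 w.2.2.2 * g3 w.2.1 w.2.2.1 * g4 w.2.1 w.2.2.2
      ≤ ∑ w ∈ sa ×ˢ sb ×ˢ sc ×ˢ sd,
          g1 w.1 w.2.2.1 * g2 w.1 w.2.2.2 * g3 w.2.1 w.2.2.1 * g4 w.2.1 w.2.2.2 :=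
        Finset.sum_le_sum_of_subset_of_nonneg hsub fun w _ _ => nn w
    _ = ∑ a ∈ sa, ∑ b ∈ sb, ∑ c ∈ sc, ∑ d ∈ sd,
          g1 a c * g2 a d * g3 b c * g4 b d := by
        simp only [Finset.sum_product]
    _ ≤ _ := finite4_bound g1 g2 g3 g4 n1 n2 n3 n4 h1 h2 h3 h4 sa sb sc sd

end Aux


section Kernels

variable {I : Type*}

def fker (A : I → I → I → I → ℝ) : (I × I × I) → I → ℝ := fun x a => A a x.1 x.2.1 x.2.2

def gker (A : I → I → I → I → ℝ) : I → (I × I × I) → ℝ := fun a y => A y.1 y.2.1 a y.2.2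

noncomputable def Lker (A : I → I → I → I → ℝ) : (I × I × I) → (I × I × I) → ℝ :=
  fun x y => ∑' a, fker A x a * gker A a y

noncomputable def Fker (A : I → I → I → I → ℝ) : (I × I × I × I) → (I × I) → ℝ :=
  fun x cd => Lker A (x.1, x.2.2.1, cd.1) (x.2.2.2, x.2.1, cd.2)

noncomputable def Gker (A : I → I → I → I → ℝ) : (I × I) → (I × I × I × I) → ℝ :=
  fun cd y => Lker A (cd.1, y.1, y.2.1) (y.2.2.1, cd.2, y.2.2.2)

def eq1 : ((I × I × I) × I) ≃ (I × I × I × I) :=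
  ⟨fun p => (p.2, p.1.1, p.1.2.1, p.1.2.2),
   fun q => ((q.2.1, q.2.2.1, q.2.2.2), q.1), fun p => rfl, fun q => rfl⟩

def eq2 : (I × (I × I × I)) ≃ (I × I × I × I) :=
  ⟨fun p => (p.2.1, p.2.2.1, p.1, p.2.2.2),
   fun q => (q.2.2.1, (q.1, q.2.1, q.2.2.2)), fun p => rfl, fun q => rfl⟩

def eq3 : ((I × I × I × I) × (I × I)) ≃ ((I × I × I) × (I × I × I)) :=
  ⟨fun p => ((p.1.1, p.1.2.2.1, p.2.1), (p.1.2.2.2, p.1.2.1, p.2.2)),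
   fun q => ((q.1.1, q.2.2.1, q.1.2.1, q.2.1), (q.1.2.2, q.2.2.2)),
   fun p => rfl, fun q => rfl⟩

def eq4 : ((I × I) × (I × I × I × I)) ≃ ((I × I × I) × (I × I × I)) :=
  ⟨fun p => ((p.1.1, p.2.1, p.2.2.1), (p.2.2.2.1, p.1.2, p.2.2.2.2)),
   fun q => ((q.1.1, q.2.2.1), (q.1.2.1, q.1.2.2, q.2.1, q.2.2.2)),
   fun p => rfl, fun q => rfl⟩

def eq5 : ((I × I) × (I × I)) ≃ (I × I × I × I) :=
  ⟨fun p => (p.2.1, p.2.2, p.1.1, p.1.2),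
   fun w => ((w.2.2.1, w.2.2.2), (w.1, w.2.1)), fun p => rfl, fun w => rfl⟩

def eq6 : ((I × I) × (I × I) × (I × I) × (I × I)) ≃ ((I × I × I × I) × (I × I × I × I)) :=
  ⟨fun z => ((z.2.1.1, z.2.1.2, z.2.2.1.1, z.1.1),
             (z.2.2.1.2, z.2.2.2.1, z.1.2, z.2.2.2.2)),
   fun p => ((p.1.2.2.2, p.2.2.2.1),
             ((p.1.1, p.1.2.1), ((p.1.2.2.1, p.2.1), (p.2.2.1, p.2.2.2.2)))),
   fun z => rfl, fun p => rfl⟩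

end Kernels

set_option maxHeartbeats 1000000 in
/-- The 8-leg tensor `T` obtained by contracting four copies of a Hilbert–Schmidt
4-leg tensor `A` in a 2×2 square arrangement is Hilbert–Schmidt with `‖T‖ ≤ ‖A‖⁴`.
Here `A r u l d` has legs (right, up, left, down); in the free-leg tuple
`z = ((r₁,r₂),((u₁,u₂),((l₁,l₂),(d₁,d₂))))` the components are the right, up, left,
down free legs of `T`, and `w = (a,(b,(c,d)))` are the four contracted internal indices. -/
theorem stmt_3 {I : Type*} [Countable I]
    (A : I → I → I → I → ℝ)
    (hA : Summable fun x : I × I × I × I => (A x.1 x.2.1 x.2.2.1 x.2.2.2) ^ 2) :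
    (∀ z : (I × I) × (I × I) × (I × I) × (I × I),
      Summable fun w : I × I × I × I =>
        A w.1 z.2.1.1 z.2.2.1.1 w.2.2.1 * A z.1.1 z.2.1.2 w.1 w.2.2.2 *
        A w.2.1 w.2.2.1 z.2.2.1.2 z.2.2.2.1 * A z.1.2 w.2.2.2 w.2.1 z.2.2.2.2) ∧
    (Summable fun z : (I × I) × (I × I) × (I × I) × (I × I) =>
      (∑' w : I × I × I × I,
        A w.1 z.2.1.1 z.2.2.1.1 w.2.2.1 * A z.1.1 z.2.1.2 w.1 w.2.2.2 *
        A w.2.1 w.2.2.1 z.2.2.1.2 z.2.2.2.1 * A z.1.2 w.2.2.2 w.2.1 z.2.2.2.2) ^ 2) ∧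
    Real.sqrt (∑' z : (I × I) × (I × I) × (I × I) × (I × I),
      (∑' w : I × I × I × I,
        A w.1 z.2.1.1 z.2.2.1.1 w.2.2.1 * A z.1.1 z.2.1.2 w.1 w.2.2.2 *
        A w.2.1 w.2.2.1 z.2.2.1.2 z.2.2.2.1 * A z.1.2 w.2.2.2 w.2.1 z.2.2.2.2) ^ 2) ≤
      (Real.sqrt (∑' x : I × I × I × I, (A x.1 x.2.1 x.2.2.1 x.2.2.2) ^ 2)) ^ 4 := by
  classical
  set S : ℝ := ∑' x : I × I × I × I, (A x.1 x.2.1 x.2.2.1 x.2.2.2) ^ 2 with hS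
  have hS0 : 0 ≤ S := tsum_nonneg fun x => sq_nonneg _
  have hfS : Summable fun p : (I × I × I) × I => fker A p.1 p.2 ^ 2 :=
    (eq1.summable_iff (f := fun x : I × I × I × I => A x.1 x.2.1 x.2.2.1 x.2.2.2 ^ 2)).2 hA
  have hgS : Summable fun p : I × (I × I × I) => gker A p.1 p.2 ^ 2 :=
    (eq2.summable_iff (f := fun x : I × I × I × I => A x.1 x.2.1 x.2.2.1 x.2.2.2 ^ 2)).2 hA
  have hfSsum : (∑' p : (I × I × I) × I, fker A p.1 p.2 ^ 2) = S :=
    eq1.tsum_eq (fun x : I × I × I × I => A x.1 x.2.1 x.2.2.1 x.2.2.2 ^ 2)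
  have hgSsum : (∑' p : I × (I × I × I), gker A p.1 p.2 ^ 2) = S :=
    eq2.tsum_eq (fun x : I × I × I × I => A x.1 x.2.1 x.2.2.1 x.2.2.2 ^ 2)
  obtain ⟨hpt, hL2, hLb⟩ := hs_contract (fker A) (gker A) hfS hgS
  have hL2' : Summable fun p : (I × I × I) × (I × I × I) => Lker A p.1 p.2 ^ 2 := hL2
  have hLb' : (∑' p : (I × I × I) × (I × I × I), Lker A p.1 p.2 ^ 2) ≤ S * S := by
    have h := hLb
    rw [hfSsum, hgSsum] at h
    exact h
  have hFS : Summable fun p : (I × I × I × I) × (I × I) => Fker A p.1 p.2 ^ 2 :=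
    (eq3.summable_iff (f := fun q : (I × I × I) × (I × I × I) => Lker A q.1 q.2 ^ 2)).2 hL2'
  have hGS : Summable fun p : (I × I) × (I × I × I × I) => Gker A p.1 p.2 ^ 2 :=
    (eq4.summable_iff (f := fun q : (I × I × I) × (I × I × I) => Lker A q.1 q.2 ^ 2)).2 hL2'
  have hFsum : (∑' p : (I × I × I × I) × (I × I), Fker A p.1 p.2 ^ 2) =
      ∑' p : (I × I × I) × (I × I × I), Lker A p.1 p.2 ^ 2 :=
    eq3.tsum_eq (fun q : (I × I × I) × (I × I × I) => Lker A q.1 q.2 ^ 2)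
  have hGsum : (∑' p : (I × I) × (I × I × I × I), Gker A p.1 p.2 ^ 2) =
      ∑' p : (I × I × I) × (I × I × I), Lker A p.1 p.2 ^ 2 :=
    eq4.tsum_eq (fun q : (I × I × I) × (I × I × I) => Lker A q.1 q.2 ^ 2)
  obtain ⟨hpt2, hT2, hTb⟩ := hs_contract (Fker A) (Gker A) hFS hGS
  -- identify the statement's inner sum with the F–G contraction
  have key : ∀ z : (I × I) × (I × I) × (I × I) × (I × I),
      (Summable fun w : I × I × I × I =>
        A w.1 z.2.1.1 z.2.2.1.1 w.2.2.1 * A z.1.1 z.2.1.2 w.1 w.2.2.2 *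
        A w.2.1 w.2.2.1 z.2.2.1.2 z.2.2.2.1 * A z.1.2 w.2.2.2 w.2.1 z.2.2.2.2) ∧
      (∑' w : I × I × I × I,
        A w.1 z.2.1.1 z.2.2.1.1 w.2.2.1 * A z.1.1 z.2.1.2 w.1 w.2.2.2 *
        A w.2.1 w.2.2.1 z.2.2.1.2 z.2.2.2.1 * A z.1.2 w.2.2.2 w.2.1 z.2.2.2.2) =
      ∑' cd : I × I,
        Fker A (z.2.1.1, z.2.1.2, z.2.2.1.1, z.1.1) cd *
        Gker A cd (z.2.2.1.2, z.2.2.2.1, z.1.2, z.2.2.2.2) := by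
    intro z
    obtain ⟨⟨r1, r2⟩, ⟨u1, u2⟩, ⟨l1, l2⟩, ⟨d1, d2⟩⟩ := z
    set P : I × I × I × I → ℝ := fun w =>
      A w.1 u1 l1 w.2.2.1 * A r1 u2 w.1 w.2.2.2 *
      A w.2.1 w.2.2.1 l2 d1 * A r2 w.2.2.2 w.2.1 d2 with hP
    have inj1 : Function.Injective (fun p : I × I => (p.1, u1, l1, p.2)) := by
      intro p q h
      simp only [Prod.mk.injEq] at h
      exact Prod.ext h.1 h.2.2.2
    have inj2 : Function.Injective (fun p : I × I => (r1, u2, p.1, p.2)) := by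
      intro p q h
      simp only [Prod.mk.injEq] at h
      exact Prod.ext h.2.2.1 h.2.2.2
    have inj3 : Function.Injective (fun p : I × I => (p.1, p.2, l2, d1)) := by
      intro p q h
      simp only [Prod.mk.injEq] at h
      exact Prod.ext h.1 h.2.1
    have inj4 : Function.Injective (fun p : I × I => (r2, p.2, p.1, d2)) := by
      intro p q h
      simp only [Prod.mk.injEq] at h
      exact Prod.ext h.2.2.1 h.2.1
    have hs1 : Summable fun p : I × I => |A p.1 u1 l1 p.2| ^ 2 := by
      simp_rw [sq_abs]
      have h := hA.comp_injective inj1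
      exact h
    have hs2 : Summable fun p : I × I => |A r1 u2 p.1 p.2| ^ 2 := by
      simp_rw [sq_abs]
      have h := hA.comp_injective inj2
      exact h
    have hs3 : Summable fun p : I × I => |A p.1 p.2 l2 d1| ^ 2 := by
      simp_rw [sq_abs]
      have h := hA.comp_injective inj3
      exact h
    have hs4 : Summable fun p : I × I => |A r2 p.2 p.1 d2| ^ 2 := by
      simp_rw [sq_abs]
      have h := hA.comp_injective inj4
      exact h
    have habs : Summable fun w : I × I × I × I => |P w| := by
      have := master4 (fun a c => |A a u1 l1 c|) (fun a d => |A r1 u2 a d|)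
        (fun b c => |A b c l2 d1|) (fun b d => |A r2 d b d2|)
        (fun _ _ => abs_nonneg _) (fun _ _ => abs_nonneg _)
        (fun _ _ => abs_nonneg _) (fun _ _ => abs_nonneg _) hs1 hs2 hs3 hs4
      refine this.congr fun w => ?_
      simp [hP, abs_mul]
    have hPsum : Summable P := habs.of_abs
    refine ⟨hPsum, ?_⟩
    have hPe : Summable (P ∘ eq5) := (eq5.summable_iff).2 hPsum
    have step1 : (∑' w : I × I × I × I, P w) = ∑' q : (I × I) × (I × I), P (eq5 q) :=
      (eq5.tsum_eq P).symm
    have step2 : (∑' q : (I × I) × (I × I), P (eq5 q)) =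
        ∑' cd : I × I, ∑' ab : I × I, P (eq5 (cd, ab)) :=
      Summable.tsum_prod' hPe fun cd => hPe.prod_factor cd
    have step3 : ∀ cd : I × I, (∑' ab : I × I, P (eq5 (cd, ab))) =
        Fker A (u1, u2, l1, r1) cd * Gker A cd (l2, d1, r2, d2) := by
      rintro ⟨c, d⟩
      have hab : Summable fun ab : I × I => P (eq5 ((c, d), ab)) :=
        hPe.prod_factor (c, d)
      have expand : (∑' ab : I × I, P (eq5 ((c, d), ab))) =
          ∑' a, ∑' b, (A a u1 l1 c * A r1 u2 a d) * (A b c l2 d1 * A r2 d b d2) := by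
        rw [Summable.tsum_prod' hab fun a => hab.prod_factor a]
        refine tsum_congr fun a => tsum_congr fun b => ?_
        simp only [hP, eq5, Equiv.coe_fn_mk]
        ring
      rw [expand]
      have inner : ∀ a, (∑' b, (A a u1 l1 c * A r1 u2 a d) * (A b c l2 d1 * A r2 d b d2)) =
          (A a u1 l1 c * A r1 u2 a d) * ∑' b, A b c l2 d1 * A r2 d b d2 := fun a =>
        tsum_mul_left
      rw [tsum_congr inner, tsum_mul_right]
      rfl
    rw [step1, step2]
    exact tsum_congr step3
  have hsum2 : Summable fun z : (I × I) × (I × I) × (I × I) × (I × I) =>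
      (∑' w : I × I × I × I,
        A w.1 z.2.1.1 z.2.2.1.1 w.2.2.1 * A z.1.1 z.2.1.2 w.1 w.2.2.2 *
        A w.2.1 w.2.2.1 z.2.2.1.2 z.2.2.2.1 * A z.1.2 w.2.2.2 w.2.1 z.2.2.2.2) ^ 2 := by
    have base : Summable ((fun p : (I × I × I × I) × (I × I × I × I) =>
        (∑' cd : I × I, Fker A p.1 cd * Gker A cd p.2) ^ 2) ∘ eq6) :=
      (eq6.summable_iff).2 hT2
    refine base.congr fun z => ?_
    exact congrArg (fun t : ℝ => t ^ 2) ((key z).2).symm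
  refine ⟨fun z => (key z).1, hsum2, ?_⟩
  have htsum_eq : (∑' z : (I × I) × (I × I) × (I × I) × (I × I),
      (∑' w : I × I × I × I,
        A w.1 z.2.1.1 z.2.2.1.1 w.2.2.1 * A z.1.1 z.2.1.2 w.1 w.2.2.2 *
        A w.2.1 w.2.2.1 z.2.2.1.2 z.2.2.2.1 * A z.1.2 w.2.2.2 w.2.1 z.2.2.2.2) ^ 2) =
      ∑' p : (I × I × I × I) × (I × I × I × I),
        (∑' cd : I × I, Fker A p.1 cd * Gker A cd p.2) ^ 2 := by
    rw [← eq6.tsum_eq (fun p : (I × I × I × I) × (I × I × I × I) =>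
      (∑' cd : I × I, Fker A p.1 cd * Gker A cd p.2) ^ 2)]
    exact tsum_congr fun z => congrArg (fun t : ℝ => t ^ 2) ((key z).2)
  have hfinal : (∑' p : (I × I × I × I) × (I × I × I × I),
      (∑' cd : I × I, Fker A p.1 cd * Gker A cd p.2) ^ 2) ≤ (S * S) * (S * S) := by
    have hLnn : 0 ≤ ∑' p : (I × I × I) × (I × I × I), Lker A p.1 p.2 ^ 2 :=
      tsum_nonneg fun p => sq_nonneg _
    calc (∑' p : (I × I × I × I) × (I × I × I × I),
          (∑' cd : I × I, Fker A p.1 cd * Gker A cd p.2) ^ 2)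
        ≤ (∑' p : (I × I × I × I) × (I × I), Fker A p.1 p.2 ^ 2) *
            ∑' p : (I × I) × (I × I × I × I), Gker A p.1 p.2 ^ 2 := hTb
      _ = (∑' p : (I × I × I) × (I × I × I), Lker A p.1 p.2 ^ 2) *
            ∑' p : (I × I × I) × (I × I × I), Lker A p.1 p.2 ^ 2 := by rw [hFsum, hGsum]
      _ ≤ (S * S) * (S * S) := mul_le_mul hLb' hLb' hLnn (mul_nonneg hS0 hS0)
  rw [htsum_eq]
  calc Real.sqrt (∑' p : (I × I × I × I) × (I × I × I × I),
        (∑' cd : I × I, Fker A p.1 cd * Gker A cd p.2) ^ 2)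
      ≤ Real.sqrt ((S * S) * (S * S)) := Real.sqrt_le_sqrt hfinal
    _ = Real.sqrt S ^ 4 := by
        rw [show (S * S) * (S * S) = (S ^ 2) ^ 2 by ring, Real.sqrt_sq (sq_nonneg S),
          show (4 : ℕ) = 2 * 2 from rfl, pow_mul, Real.sq_sqrt hS0]
end

section
/- Let A be a Hilbert–Schmidt 4-leg tensor indexed by a countable set I, and let Z(A, Lx, Ly) be the value of the periodic Lx × Ly tensor network obtained by placing a copy of A at every vertex of the discrete torus (ℤ/Lx)×(ℤ/Ly) and contracting all horizontally and vertically adjacent legs. If Lx, Ly ≥ 2 then Z(A, Lx, Ly) is finite (the defining multi-sum converges absolutely) and |Z(A, Lx, Ly)| ≤ ‖A‖^{Lx·Ly}. -/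
open scoped ENNReal NNReal
open MeasureTheory

namespace TN

variable {α β K : Type*}

/-- Cauchy–Schwarz for `tsum` in `ℝ≥0∞`. -/
lemma enn_cs (f g : α → ℝ≥0∞) :
    (∑' a, f a * g a) ^ 2 ≤ (∑' a, f a ^ 2) * (∑' a, g a ^ 2) := by
  letI : MeasurableSpace α := ⊤
  haveI : MeasurableSingletonClass α := ⟨fun _ => trivial⟩
  have hpq : Real.HolderConjugate 2 2 := Real.HolderConjugate.two_two
  have h := ENNReal.lintegral_mul_le_Lp_mul_Lq (Measure.count (α := α)) hpq
      (f := f) (g := g) (Measurable.aemeasurable (fun _ _ => trivial))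
      (Measurable.aemeasurable (fun _ _ => trivial))
  simp only [Pi.mul_apply, lintegral_count] at h
  have h2 := pow_le_pow_left₀ zero_le h 2
  calc (∑' a, f a * g a) ^ 2
      ≤ ((∑' a, f a ^ (2:ℝ)) ^ (1/(2:ℝ)) * (∑' a, g a ^ (2:ℝ)) ^ (1/(2:ℝ))) ^ 2 := h2
    _ = (∑' a, f a ^ 2) * (∑' a, g a ^ 2) := by
        rw [mul_pow]
        rw [← ENNReal.rpow_natCast ((∑' a, f a ^ (2:ℝ)) ^ (1/(2:ℝ))) 2,
            ← ENNReal.rpow_natCast ((∑' a, g a ^ (2:ℝ)) ^ (1/(2:ℝ))) 2,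
            ← ENNReal.rpow_mul, ← ENNReal.rpow_mul]
        norm_num

lemma enn_le_of_sq_le_sq {a b : ℝ≥0∞} (h : a ^ 2 ≤ b ^ 2) : a ≤ b := by
  rw [← ENNReal.rpow_natCast a 2, ← ENNReal.rpow_natCast b 2] at h
  have h2 := ENNReal.rpow_le_rpow h (by norm_num : (0:ℝ) ≤ 1/2)
  rw [← ENNReal.rpow_mul, ← ENNReal.rpow_mul] at h2
  norm_num at h2
  exact h2

lemma enn_tsum_mul_tsum (f : α → ℝ≥0∞) (g : β → ℝ≥0∞) :
    (∑' a, f a) * (∑' b, g b) = ∑' p : α × β, f p.1 * g p.2 := by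
  rw [ENNReal.tsum_prod']
  simp_rw [ENNReal.tsum_mul_left, ENNReal.tsum_mul_right]

lemma tsum_pi_fin : ∀ (n : ℕ) (F : Fin n → β → ℝ≥0∞),
    ∑' f : Fin n → β, ∏ a, F a (f a) = ∏ a, ∑' b, F a b := by
  intro n
  induction n with
  | zero =>
      intro F
      rw [tsum_eq_single (fun i => i.elim0) (fun b hb => absurd (Subsingleton.elim b _) hb)]
      simp
  | succ n ih =>
      intro F
      rw [← (Fin.consEquiv (fun _ => β)).tsum_eq, ENNReal.tsum_prod']
      simp only [Fin.consEquiv_apply]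
      calc ∑' (a : β), ∑' (f : Fin n → β), ∏ i, F i ((Fin.consEquiv fun _ => β) (a, f) i)
          = ∑' (a : β), ∑' (f : Fin n → β), F 0 a * ∏ i : Fin n, F i.succ (f i) := by
            refine tsum_congr fun a => tsum_congr fun f => ?_
            rw [Fin.prod_univ_succ]
            simp
        _ = (∑' b, F 0 b) * ∏ i : Fin n, ∑' b, F i.succ b := by
            simp_rw [ENNReal.tsum_mul_left, ih fun i b => F i.succ b]
            rw [ENNReal.tsum_mul_right]
        _ = ∏ a, ∑' b, F a b := by rw [Fin.prod_univ_succ]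

lemma tsum_pi_prod [Fintype α] (F : α → β → ℝ≥0∞) :
    ∑' f : α → β, ∏ a, F a (f a) = ∏ a, ∑' b, F a b := by
  classical
  let e := Fintype.equivFin α
  rw [← (Equiv.arrowCongr e (Equiv.refl β)).symm.tsum_eq]
  calc ∑' g : Fin (Fintype.card α) → β, ∏ a, F a ((Equiv.arrowCongr e (Equiv.refl β)).symm g a)
      = ∑' g : Fin (Fintype.card α) → β, ∏ j, F (e.symm j) (g j) := by
        refine tsum_congr fun g => Fintype.prod_equiv e _ _ fun a => ?_
        simp [Equiv.arrowCongr]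
    _ = ∏ j, ∑' b, F (e.symm j) b := tsum_pi_fin _ _
    _ = ∏ a, ∑' b, F a b := (Fintype.prod_equiv e _ _ fun a => by rw [e.symm_apply_apply]).symm


noncomputable def tpow (T : K → K → ℝ≥0∞) : ℕ → K → K → ℝ≥0∞
  | 0 => T
  | (m+1) => fun a c => ∑' b, T a b * tpow T m b c

noncomputable def hs (T : K → K → ℝ≥0∞) : ℝ≥0∞ := ∑' p : K × K, T p.1 p.2 ^ 2

lemma hs_tpow_le (T : K → K → ℝ≥0∞) : ∀ m, hs (tpow T m) ≤ hs T ^ (m + 1)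
  | 0 => by simp [hs, tpow]
  | (m+1) => by
      calc hs (tpow T (m+1)) = ∑' p : K × K, (∑' b, T p.1 b * tpow T m b p.2) ^ 2 := rfl
        _ ≤ ∑' p : K × K, (∑' b, T p.1 b ^ 2) * (∑' b, tpow T m b p.2 ^ 2) :=
            ENNReal.tsum_le_tsum fun p => enn_cs _ _
        _ = (∑' a, ∑' b, T a b ^ 2) * (∑' c, ∑' b, tpow T m b c ^ 2) := by
            rw [enn_tsum_mul_tsum]
        _ = hs T * hs (tpow T m) := by
            rw [hs, hs, ENNReal.tsum_prod (f := fun a b => T a b ^ 2),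
              ENNReal.tsum_prod (f := fun b c => tpow T m b c ^ 2),
              ENNReal.tsum_comm (f := fun b c => tpow T m b c ^ 2)]
        _ ≤ hs T * hs T ^ (m + 1) := mul_le_mul_right (hs_tpow_le T m) _
        _ = hs T ^ (m + 1 + 1) := by ring

lemma chain (T : K → K → ℝ≥0∞) : ∀ (m : ℕ) (G : K → K → ℝ≥0∞),
    (∑' g : Fin (m+2) → K,
      G (g 0) (g (Fin.last (m+1))) * ∏ i : Fin (m+1), T (g i.castSucc) (g i.succ))
      = ∑' p : K × K, G p.1 p.2 * tpow T m p.1 p.2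
  | 0, G => by
      rw [← (piFinTwoEquiv (fun _ => K)).symm.tsum_eq]
      refine tsum_congr fun p => ?_
      simp [Fin.prod_univ_one, tpow, Fin.last]
  | (m+1), G => by
      rw [← (Fin.consEquiv (fun _ => K)).tsum_eq, ENNReal.tsum_prod']
      have key : ∀ (a : K) (g : Fin (m+2) → K),
          G ((Fin.consEquiv fun _ => K) (a, g) 0)
              ((Fin.consEquiv fun _ => K) (a, g) (Fin.last (m+2))) *
            ∏ i : Fin (m+2), T ((Fin.consEquiv fun _ => K) (a, g) i.castSucc)
              ((Fin.consEquiv fun _ => K) (a, g) i.succ)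
          = (G a (g (Fin.last (m+1))) * T a (g 0)) *
              ∏ i : Fin (m+1), T (g i.castSucc) (g i.succ) := by
        intro a g
        simp only [Fin.consEquiv_apply]
        rw [Fin.prod_univ_succ]
        have h1 : Fin.cons (α := fun _ => K) a g (Fin.last (m+2)) = g (Fin.last (m+1)) := by
          rw [← Fin.succ_last, Fin.cons_succ]
        have h2 : ∀ i : Fin (m+1),
            T (Fin.cons (α := fun _ => K) a g i.succ.castSucc)
              (Fin.cons (α := fun _ => K) a g i.succ.succ)
            = T (g i.castSucc) (g i.succ) := by
          intro i
          rw [← Fin.succ_castSucc, Fin.cons_succ, Fin.cons_succ]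
        rw [h1]
        simp only [Fin.castSucc_zero, Fin.cons_zero, Fin.succ_zero_eq_one]
        have h3 : Fin.cons (α := fun _ => K) a g 1 = g 0 := by
          rw [← Fin.succ_zero_eq_one, Fin.cons_succ]
        rw [h3, Finset.prod_congr rfl fun i _ => h2 i]
        ring
      calc ∑' (a : K), ∑' (g : Fin (m+2) → K),
              G ((Fin.consEquiv fun _ => K) (a, g) 0)
                ((Fin.consEquiv fun _ => K) (a, g) (Fin.last (m+2))) *
              ∏ i : Fin (m+2), T ((Fin.consEquiv fun _ => K) (a, g) i.castSucc)
                ((Fin.consEquiv fun _ => K) (a, g) i.succ)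
          = ∑' (g : Fin (m+2) → K),
              (∑' (a : K), G a (g (Fin.last (m+1))) * T a (g 0)) *
                ∏ i : Fin (m+1), T (g i.castSucc) (g i.succ) := by
            rw [ENNReal.tsum_comm]
            refine tsum_congr fun g => ?_
            rw [tsum_congr fun a => key a g, ENNReal.tsum_mul_right]
        _ = ∑' p : K × K, (∑' (a : K), G a p.2 * T a p.1) * tpow T m p.1 p.2 :=
            chain T m (fun u w => ∑' (a : K), G a w * T a u)
        _ = ∑' p : K × K, G p.1 p.2 * tpow T (m+1) p.1 p.2 := by
            calc ∑' p : K × K, (∑' (a : K), G a p.2 * T a p.1) * tpow T m p.1 p.2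
                = ∑' p : K × K, ∑' (a : K), G a p.2 * (T a p.1 * tpow T m p.1 p.2) := by
                  refine tsum_congr fun p => ?_
                  rw [← ENNReal.tsum_mul_right]
                  exact tsum_congr fun a => by ring
              _ = ∑' (a : K), ∑' p : K × K, G a p.2 * (T a p.1 * tpow T m p.1 p.2) :=
                  ENNReal.tsum_comm
              _ = ∑' (a : K), ∑' (u : K), ∑' (w : K), G a w * (T a u * tpow T m u w) :=
                  tsum_congr fun a => ENNReal.tsum_prod (f := fun u w => G a w * (T a u * tpow T m u w))
              _ = ∑' (a : K), ∑' (w : K), ∑' (u : K), G a w * (T a u * tpow T m u w) :=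
                  tsum_congr fun a => ENNReal.tsum_comm
              _ = ∑' (a : K), ∑' (w : K), G a w * ∑' (u : K), T a u * tpow T m u w := by
                  refine tsum_congr fun a => tsum_congr fun w => ?_
                  rw [ENNReal.tsum_mul_left]
              _ = ∑' p : K × K, G p.1 p.2 * tpow T (m+1) p.1 p.2 :=
                  (ENNReal.tsum_prod (f := fun a w => G a w * tpow T (m+1) a w)).symm


def zmodEquiv (L : ℕ) [NeZero L] : ZMod L ≃ Fin L where
  toFun x := ⟨x.val, ZMod.val_lt x⟩
  invFun j := ((j : ℕ) : ZMod L)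
  left_inv x := ZMod.natCast_rightInverse x
  right_inv j := Fin.ext (ZMod.val_cast_of_lt j.isLt)

lemma trace_le (T : K → K → ℝ≥0∞) (L : ℕ) [NeZero L] (hL : 2 ≤ L) :
    (∑' h : ZMod L → K, ∏ x : ZMod L, T (h (x - 1)) (h x)) ^ 2
      ≤ (∑' p : K × K, T p.1 p.2 ^ 2) ^ L := by
  obtain ⟨n, rfl⟩ : ∃ n, L = n + 2 := ⟨L - 2, by omega⟩
  set e := Equiv.arrowCongr (zmodEquiv (n+2)) (Equiv.refl K) with he
  have pre0 : ((((0 : Fin (n+2)) : ℕ) : ZMod (n+2)) - 1) = (((Fin.last (n+1) : Fin (n+2)) : ℕ) : ZMod (n+2)) := by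
    simp only [Fin.val_zero, Nat.cast_zero, zero_sub, Fin.val_last]
    have : ((n + 1 : ℕ) : ZMod (n+2)) = ((n + 2 : ℕ) : ZMod (n+2)) - 1 := by push_cast; ring
    rw [this, ZMod.natCast_self, zero_sub]
  have preS : ∀ i : Fin (n+1),
      ((((i.succ : Fin (n+2)) : ℕ) : ZMod (n+2)) - 1)
        = (((i.castSucc : Fin (n+2)) : ℕ) : ZMod (n+2)) := by
    intro i
    simp only [Fin.val_succ, Fin.coe_castSucc]
    push_cast
    ring
  have key : ∀ g : Fin (n+2) → K,
      (∏ x : ZMod (n+2), T (e.symm g (x - 1)) (e.symm g x))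
        = T (g (Fin.last (n+1))) (g 0) * ∏ i : Fin (n+1), T (g i.castSucc) (g i.succ) := by
    intro g
    have hsymm : ∀ j : Fin (n+2), e.symm g (((j : ℕ) : ZMod (n+2))) = g j := by
      intro j
      simp only [he, Equiv.arrowCongr_symm, Equiv.arrowCongr_apply, Equiv.refl_symm,
        Equiv.coe_refl, Function.comp_apply, id_eq]
      congr 1
      exact (zmodEquiv (n+2)).right_inv j
    have reidx : (∏ x : ZMod (n+2), T (e.symm g (x - 1)) (e.symm g x))
        = ∏ j : Fin (n+2), T (e.symm g ((((j : ℕ) : ZMod (n+2))) - 1))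
            (e.symm g (((j : ℕ) : ZMod (n+2)))) :=
      (Fintype.prod_equiv (zmodEquiv (n+2)).symm _ _ (fun j => rfl)).symm
    rw [reidx, Fin.prod_univ_succ]
    congr 1
    · rw [pre0, hsymm, hsymm]
    · refine Finset.prod_congr rfl fun i _ => ?_
      rw [preS, hsymm, hsymm]
  calc (∑' h : ZMod (n+2) → K, ∏ x : ZMod (n+2), T (h (x - 1)) (h x)) ^ 2
      = (∑' g : Fin (n+2) → K, ∏ x : ZMod (n+2), T (e.symm g (x - 1)) (e.symm g x)) ^ 2 := by
        exact congrArg (· ^ 2)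
          (e.symm.tsum_eq fun h => ∏ x : ZMod (n+2), T (h (x - 1)) (h x)).symm
    _ = (∑' g : Fin (n+2) → K,
          T (g (Fin.last (n+1))) (g 0) * ∏ i : Fin (n+1), T (g i.castSucc) (g i.succ)) ^ 2 := by
        rw [tsum_congr key]
    _ = (∑' p : K × K, T p.2 p.1 * tpow T n p.1 p.2) ^ 2 := by
        rw [chain T n (fun a b => T b a)]
    _ ≤ (∑' p : K × K, (T p.2 p.1) ^ 2) * (∑' p : K × K, tpow T n p.1 p.2 ^ 2) :=
        enn_cs _ _
    _ = (∑' p : K × K, T p.1 p.2 ^ 2) * hs (tpow T n) := by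
        congr 1
        exact ((Equiv.prodComm K K).tsum_eq (fun p => T p.1 p.2 ^ 2))
    _ ≤ (∑' p : K × K, T p.1 p.2 ^ 2) * hs T ^ (n + 1) :=
        mul_le_mul_right (hs_tpow_le T n) _
    _ = (∑' p : K × K, T p.1 p.2 ^ 2) ^ (n + 2) := by rw [hs]; ring


variable {I : Type*}

noncomputable def tmat (Ly : ℕ) [NeZero Ly] (B : I → I → I → I → ℝ≥0∞) :
    (ZMod Ly → I) → (ZMod Ly → I) → ℝ≥0∞ :=
  fun l r => ∑' w : ZMod Ly → I, ∏ y : ZMod Ly, B (r y) (w (y - 1)) (l y) (w y)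

noncomputable def smat (B : I → I → I → I → ℝ≥0∞) : I × I → I × I → ℝ≥0∞ :=
  fun p q => ∑' c : I × I, B c.2 p.1 c.1 q.1 * B c.2 p.2 c.1 q.2

lemma stepA (Lx Ly : ℕ) [NeZero Lx] [NeZero Ly] (B : I → I → I → I → ℝ≥0∞) :
    (∑' cfg : (ZMod Lx × ZMod Ly → I) × (ZMod Lx × ZMod Ly → I),
      ∏ v : ZMod Lx × ZMod Ly,
        B (cfg.1 v) (cfg.2 (v - (0, 1))) (cfg.1 (v - (1, 0))) (cfg.2 v))
    = ∑' H : ZMod Lx → ZMod Ly → I, ∏ x : ZMod Lx, tmat Ly B (H (x - 1)) (H x) := by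
  rw [ENNReal.tsum_prod']
  rw [← (Equiv.curry (ZMod Lx) (ZMod Ly) I).symm.tsum_eq]
  refine tsum_congr fun H => ?_
  rw [← (Equiv.curry (ZMod Lx) (ZMod Ly) I).symm.tsum_eq]
  have h1 : ∀ W : ZMod Lx → ZMod Ly → I,
      (∏ v : ZMod Lx × ZMod Ly,
        B ((Equiv.curry (ZMod Lx) (ZMod Ly) I).symm H v)
          ((Equiv.curry (ZMod Lx) (ZMod Ly) I).symm W (v - (0, 1)))
          ((Equiv.curry (ZMod Lx) (ZMod Ly) I).symm H (v - (1, 0)))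
          ((Equiv.curry (ZMod Lx) (ZMod Ly) I).symm W v))
      = ∏ x : ZMod Lx, ∏ y : ZMod Ly, B (H x y) (W x (y - 1)) (H (x - 1) y) (W x y) := by
    intro W
    rw [Fintype.prod_prod_type]
    refine Finset.prod_congr rfl fun x _ => Finset.prod_congr rfl fun y _ => ?_
    simp [Equiv.curry_symm_apply, Function.uncurry, Prod.mk_sub_mk]
  exact (tsum_congr h1).trans
    (tsum_pi_prod (F := fun (x : ZMod Lx) (w : ZMod Ly → I) => ∏ y : ZMod Ly, B (H x y) (w (y - 1)) (H (x - 1) y) (w y)))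

lemma stepB (Ly : ℕ) [NeZero Ly] (B : I → I → I → I → ℝ≥0∞) :
    (∑' p : (ZMod Ly → I) × (ZMod Ly → I), tmat Ly B p.1 p.2 ^ 2)
      = ∑' W : ZMod Ly → I × I, ∏ y : ZMod Ly, smat B (W (y - 1)) (W y) := by
  have h1 : ∀ p : (ZMod Ly → I) × (ZMod Ly → I), tmat Ly B p.1 p.2 ^ 2
      = ∑' q : (ZMod Ly → I) × (ZMod Ly → I),
          ∏ y : ZMod Ly,
            (B (p.2 y) (q.1 (y - 1)) (p.1 y) (q.1 y) *
              B (p.2 y) (q.2 (y - 1)) (p.1 y) (q.2 y)) := by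
    intro p
    simp only [tmat, sq]
    rw [enn_tsum_mul_tsum]
    exact tsum_congr fun q => Finset.prod_mul_distrib.symm
  rw [tsum_congr h1, ENNReal.tsum_comm]
  have h2 : ∀ q : (ZMod Ly → I) × (ZMod Ly → I),
      (∑' p : (ZMod Ly → I) × (ZMod Ly → I),
        ∏ y : ZMod Ly,
          (B (p.2 y) (q.1 (y - 1)) (p.1 y) (q.1 y) *
            B (p.2 y) (q.2 (y - 1)) (p.1 y) (q.2 y)))
      = ∏ y : ZMod Ly, smat B (q.1 (y - 1), q.2 (y - 1)) (q.1 y, q.2 y) := by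
    intro q
    rw [← (Equiv.arrowProdEquivProdArrow (ZMod Ly) (fun _ => I) (fun _ => I)).tsum_eq]
    exact tsum_pi_prod
      (F := fun (y : ZMod Ly) (c : I × I) =>
        B c.2 (q.1 (y - 1)) c.1 (q.1 y) * B c.2 (q.2 (y - 1)) c.1 (q.2 y))
  rw [tsum_congr h2]
  exact ((Equiv.arrowProdEquivProdArrow (ZMod Ly) (fun _ => I) (fun _ => I)).tsum_eq
    (fun q : (ZMod Ly → I) × (ZMod Ly → I) =>
      ∏ y : ZMod Ly, smat B (q.1 (y - 1), q.2 (y - 1)) (q.1 y, q.2 y))).symm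

lemma stepC (B : I → I → I → I → ℝ≥0∞) :
    (∑' p : (I × I) × (I × I), smat B p.1 p.2 ^ 2)
      ≤ (∑' x : I × I × I × I, B x.1 x.2.1 x.2.2.1 x.2.2.2 ^ 2) ^ 2 := by
  set D : I × I → ℝ≥0∞ := fun z => ∑' c : I × I, B c.2 z.1 c.1 z.2 ^ 2 with hD
  have h1 : ∀ p : (I × I) × (I × I), smat B p.1 p.2 ^ 2 ≤ D (p.1.1, p.2.1) * D (p.1.2, p.2.2) :=
    fun p => enn_cs _ _
  have h2 : (∑' p : (I × I) × (I × I), D (p.1.1, p.2.1) * D (p.1.2, p.2.2))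
      = (∑' z : I × I, D z) ^ 2 := by
    rw [sq, enn_tsum_mul_tsum,
      ← (Equiv.prodProdProdComm I I I I).tsum_eq (fun r : (I × I) × (I × I) => D r.1 * D r.2)]
    rfl
  have h3 : (∑' z : I × I, D z) = ∑' x : I × I × I × I, B x.1 x.2.1 x.2.2.1 x.2.2.2 ^ 2 := by
    simp only [hD]
    rw [← ENNReal.tsum_prod (f := fun z c : I × I => B c.2 z.1 c.1 z.2 ^ 2)]
    exact Equiv.tsum_eq
      (⟨fun s => (s.2.2, s.1.1, s.2.1, s.1.2), fun x => ((x.2.1, x.2.2.2), (x.2.2.1, x.1)),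
        fun s => rfl, fun x => rfl⟩ : ((I × I) × (I × I)) ≃ (I × I × I × I))
      (fun x : I × I × I × I => B x.1 x.2.1 x.2.2.1 x.2.2.2 ^ 2)
  calc (∑' p : (I × I) × (I × I), smat B p.1 p.2 ^ 2)
      ≤ ∑' p : (I × I) × (I × I), D (p.1.1, p.2.1) * D (p.1.2, p.2.2) :=
        ENNReal.tsum_le_tsum h1
    _ = (∑' z : I × I, D z) ^ 2 := h2
    _ = (∑' x : I × I × I × I, B x.1 x.2.1 x.2.2.1 x.2.2.2 ^ 2) ^ 2 := by rw [h3]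

end TN


/-- The partition function of the periodic `Lx × Ly` tensor network built from a
Hilbert–Schmidt 4-leg tensor `A` (legs: right, up, left, down) is absolutely
convergent and bounded by `‖A‖^(Lx·Ly)`, provided `Lx, Ly ≥ 2` (no self-contractions).
The configuration assigns an index to each horizontal edge (`cfg.1 v` is the edge to
the right of vertex `v`) and each vertical edge (`cfg.2 v` is the edge below `v`). -/
theorem stmt_4 {I : Type*} [Countable I] (Lx Ly : ℕ) [NeZero Lx] [NeZero Ly]
    (hLx : 2 ≤ Lx) (hLy : 2 ≤ Ly)
    (A : I → I → I → I → ℝ)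
    (hA : Summable fun x : I × I × I × I => (A x.1 x.2.1 x.2.2.1 x.2.2.2) ^ 2) :
    (Summable fun cfg : (ZMod Lx × ZMod Ly → I) × (ZMod Lx × ZMod Ly → I) =>
      ∏ v : ZMod Lx × ZMod Ly,
        A (cfg.1 v) (cfg.2 (v - (0, 1))) (cfg.1 (v - (1, 0))) (cfg.2 v)) ∧
    |∑' cfg : (ZMod Lx × ZMod Ly → I) × (ZMod Lx × ZMod Ly → I),
        ∏ v : ZMod Lx × ZMod Ly,
          A (cfg.1 v) (cfg.2 (v - (0, 1))) (cfg.1 (v - (1, 0))) (cfg.2 v)| ≤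
      (Real.sqrt (∑' x : I × I × I × I, (A x.1 x.2.1 x.2.2.1 x.2.2.2) ^ 2)) ^ (Lx * Ly) := by
  classical
  set B : I → I → I → I → ℝ≥0∞ := fun a b c d => (‖A a b c d‖₊ : ℝ≥0∞) with hB
  set S : ℝ≥0∞ := ∑' x : I × I × I × I, B x.1 x.2.1 x.2.2.1 x.2.2.2 ^ 2 with hS
  have hAnn : Summable fun x : I × I × I × I => (‖A x.1 x.2.1 x.2.2.1 x.2.2.2‖₊ ^ 2 : ℝ≥0) := by
    rw [← NNReal.summable_coe]
    convert hA using 2 with x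
    push_cast
    rw [Real.norm_eq_abs, sq_abs]
  have hScoe : S
      = ((∑' x : I × I × I × I, ‖A x.1 x.2.1 x.2.2.1 x.2.2.2‖₊ ^ 2 : ℝ≥0) : ℝ≥0∞) := by
    rw [ENNReal.coe_tsum hAnn, hS]
    simp [hB]
  have hSne : S ≠ ⊤ := by rw [hScoe]; exact ENNReal.coe_ne_top
  have hStoReal : S.toReal = ∑' x : I × I × I × I, (A x.1 x.2.1 x.2.2.1 x.2.2.2) ^ 2 := by
    rw [hScoe, ENNReal.coe_toReal, NNReal.coe_tsum]
    refine tsum_congr fun x => ?_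
    push_cast
    rw [Real.norm_eq_abs, sq_abs]
  set F : (ZMod Lx × ZMod Ly → I) × (ZMod Lx × ZMod Ly → I) → ℝ := fun cfg =>
    ∏ v : ZMod Lx × ZMod Ly, A (cfg.1 v) (cfg.2 (v - (0, 1))) (cfg.1 (v - (1, 0))) (cfg.2 v)
    with hF
  have hFnn : ∀ cfg, ((‖F cfg‖₊ : ℝ≥0∞))
      = ∏ v : ZMod Lx × ZMod Ly,
          B (cfg.1 v) (cfg.2 (v - (0, 1))) (cfg.1 (v - (1, 0))) (cfg.2 v) := by
    intro cfg
    simp [hF, hB, nnnorm_prod, ENNReal.coe_finset_prod]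
  set ZE : ℝ≥0∞ :=
    ∑' cfg : (ZMod Lx × ZMod Ly → I) × (ZMod Lx × ZMod Ly → I), (‖F cfg‖₊ : ℝ≥0∞) with hZE
  have htmat : (∑' p : (ZMod Ly → I) × (ZMod Ly → I), TN.tmat Ly B p.1 p.2 ^ 2) ≤ S ^ Ly := by
    refine TN.enn_le_of_sq_le_sq ?_
    rw [TN.stepB Ly B]
    calc (∑' W : ZMod Ly → I × I, ∏ y : ZMod Ly, TN.smat B (W (y - 1)) (W y)) ^ 2
        ≤ (∑' p : (I × I) × (I × I), TN.smat B p.1 p.2 ^ 2) ^ Ly :=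
          TN.trace_le (TN.smat B) Ly hLy
      _ ≤ (S ^ 2) ^ Ly := pow_le_pow_left₀ zero_le (TN.stepC B) Ly
      _ = (S ^ Ly) ^ 2 := by ring
  have hZEbound : ZE ^ 2 ≤ S ^ (Lx * Ly) := by
    rw [hZE, tsum_congr hFnn, TN.stepA Lx Ly B]
    calc (∑' H : ZMod Lx → ZMod Ly → I, ∏ x : ZMod Lx, TN.tmat Ly B (H (x - 1)) (H x)) ^ 2
        ≤ (∑' p : (ZMod Ly → I) × (ZMod Ly → I), TN.tmat Ly B p.1 p.2 ^ 2) ^ Lx :=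
          TN.trace_le (TN.tmat Ly B) Lx hLx
      _ ≤ (S ^ Ly) ^ Lx := pow_le_pow_left₀ zero_le htmat Lx
      _ = S ^ (Lx * Ly) := by rw [← pow_mul, mul_comm]
  have hZElt : ZE < ⊤ := by
    have h2 : ZE ^ 2 < ⊤ :=
      lt_of_le_of_lt hZEbound (ENNReal.pow_lt_top hSne.lt_top)
    by_contra h
    rw [not_lt, top_le_iff] at h
    rw [h] at h2
    simp [ENNReal.top_pow] at h2
  have hsummnn : Summable fun cfg : (ZMod Lx × ZMod Ly → I) × (ZMod Lx × ZMod Ly → I)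
      => ‖F cfg‖₊ := by
    rw [← ENNReal.tsum_coe_ne_top_iff_summable]
    exact hZElt.ne
  have hsumm : Summable F := Summable.of_nnnorm hsummnn
  have hsumnorm : Summable fun cfg : (ZMod Lx × ZMod Ly → I) × (ZMod Lx × ZMod Ly → I)
      => ‖F cfg‖ := by
    have := NNReal.summable_coe.2 hsummnn
    simpa [coe_nnnorm] using this
  refine ⟨hsumm, ?_⟩
  have hZEtoReal : ZE.toReal = ∑' cfg, ‖F cfg‖ := by
    rw [hZE, ← ENNReal.coe_tsum hsummnn, ENNReal.coe_toReal, NNReal.coe_tsum]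
    exact tsum_congr fun a => coe_nnnorm _
  have hsq : (∑' cfg, ‖F cfg‖) ^ 2
      ≤ (∑' x : I × I × I × I, (A x.1 x.2.1 x.2.2.1 x.2.2.2) ^ 2) ^ (Lx * Ly) := by
    rw [← hZEtoReal, ← hStoReal]
    calc ZE.toReal ^ 2 = (ZE ^ 2).toReal := by rw [ENNReal.toReal_pow]
      _ ≤ (S ^ (Lx * Ly)).toReal :=
          ENNReal.toReal_mono (ENNReal.pow_ne_top hSne) hZEbound
      _ = S.toReal ^ (Lx * Ly) := by rw [ENNReal.toReal_pow]
  have h0 : (0:ℝ) ≤ ∑' cfg, ‖F cfg‖ := tsum_nonneg fun _ => norm_nonneg _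
  have h1 : (0:ℝ) ≤ ∑' x : I × I × I × I, (A x.1 x.2.1 x.2.2.1 x.2.2.2) ^ 2 :=
    tsum_nonneg fun _ => sq_nonneg _
  have hfinal : (∑' cfg, ‖F cfg‖)
      ≤ Real.sqrt (∑' x : I × I × I × I, (A x.1 x.2.1 x.2.2.1 x.2.2.2) ^ 2) ^ (Lx * Ly) := by
    have hsqrtpow : ∀ (y : ℝ), 0 ≤ y → ∀ n : ℕ, Real.sqrt (y ^ n) = Real.sqrt y ^ n := by
      intro y hy n
      rw [← Real.sqrt_sq (pow_nonneg (Real.sqrt_nonneg _) n)]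
      congr 1
      rw [← pow_mul, mul_comm n 2, pow_mul, Real.sq_sqrt hy]
    have hmono := Real.sqrt_le_sqrt hsq
    rw [Real.sqrt_sq h0, hsqrtpow _ h1] at hmono
    exact hmono
  calc |∑' cfg, F cfg| ≤ ∑' cfg, ‖F cfg‖ := by
        rw [← Real.norm_eq_abs]
        exact norm_tsum_le_tsum_norm hsumnorm
    _ ≤ _ := hfinal
end

section
/- Define the trajectory α₀ = α, α_{j+1} = r(α_j) where r(α) = α¹⁶/(α¹⁶+(1−α)¹⁶), and ν(α) = α¹⁶+(1−α)¹⁶. Then for every α ∈ (0,1), the series Σ_{j=1}^∞ 16^{−j} ln ν(α_{j−1}) converges absolutely and its sum equals max(ln α, ln(1−α)). -/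
set_option maxHeartbeats 1000000


/-- Along the RG trajectory `α₀ = α`, `α_{j+1} = r(α_j)`, the series
`Σ_{j≥1} 16^{−j} ln ν(α_{j−1})` converges absolutely and sums to the
zero-temperature free energy `max(ln α, ln(1−α))`, for every `α ∈ (0,1)`. -/
theorem stmt_8 (α : ℝ) (hα : α ∈ Set.Ioo (0 : ℝ) 1) :
    let r : ℝ → ℝ := fun x => x ^ 16 / (x ^ 16 + (1 - x) ^ 16)
    let ν : ℝ → ℝ := fun x => x ^ 16 + (1 - x) ^ 16
    (Summable fun j : ℕ => |((1 : ℝ) / 16) ^ (j + 1) * Real.log (ν (r^[j] α))|) ∧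
    ∑' j : ℕ, ((1 : ℝ) / 16) ^ (j + 1) * Real.log (ν (r^[j] α)) =
      max (Real.log α) (Real.log (1 - α)) := by
  intro r ν
  obtain ⟨hα0, hα1⟩ := hα
  set f : ℝ → ℝ := fun x => max (Real.log x) (Real.log (1 - x)) with hf
  have hr_mem : ∀ x ∈ Set.Ioo (0:ℝ) 1, r x ∈ Set.Ioo (0:ℝ) 1 := by
    rintro x ⟨hx0, hx1⟩
    have h1 : 0 < x ^ 16 := pow_pos hx0 16
    have h2 : 0 < (1 - x) ^ 16 := pow_pos (by linarith) 16
    constructor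
    · exact div_pos h1 (by linarith)
    · rw [div_lt_one (by linarith)]; linarith
  have hmem : ∀ n, r^[n] α ∈ Set.Ioo (0:ℝ) 1 := by
    intro n
    induction n with
    | zero => exact ⟨hα0, hα1⟩
    | succ n ih => rw [Function.iterate_succ_apply']; exact hr_mem _ ih
  -- logarithmic bounds on ν
  have hνbound : ∀ x ∈ Set.Ioo (0:ℝ) 1, |Real.log (ν x)| ≤ 16 * Real.log 2 := by
    rintro x ⟨hx0, hx1⟩
    have h1 : 0 < x ^ 16 := pow_pos hx0 16
    have h2 : 0 < (1 - x) ^ 16 := pow_pos (by linarith) 16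
    have hνx : 0 < ν x := add_pos h1 h2
    have hle1 : ν x ≤ 1 := by
      have hx : x ^ 16 ≤ x := pow_le_of_le_one hx0.le hx1.le (by norm_num)
      have hy : (1 - x) ^ 16 ≤ 1 - x :=
        pow_le_of_le_one (by linarith) (by linarith) (by norm_num)
      show x ^ 16 + (1 - x) ^ 16 ≤ 1
      linarith
    have hge : ((1:ℝ)/2) ^ 16 ≤ ν x := by
      show ((1:ℝ)/2) ^ 16 ≤ x ^ 16 + (1 - x) ^ 16
      rcases le_total x (1/2) with h | h
      · have : ((1:ℝ)/2) ^ 16 ≤ (1 - x) ^ 16 :=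
          pow_le_pow_left₀ (by norm_num) (by linarith) 16
        linarith
      · have : ((1:ℝ)/2) ^ 16 ≤ x ^ 16 :=
          pow_le_pow_left₀ (by norm_num) (by linarith) 16
        linarith
    have hup : Real.log (ν x) ≤ 0 := Real.log_nonpos hνx.le hle1
    have hlow : -(16 * Real.log 2) ≤ Real.log (ν x) := by
      have := Real.log_le_log (by positivity) hge
      rw [Real.log_pow] at this
      have h12 : Real.log ((1:ℝ)/2) = -Real.log 2 := by
        rw [one_div, Real.log_inv]
      push_cast at this
      rw [h12] at this
      linarith
    rw [abs_le]
    exact ⟨hlow, by linarith [Real.log_pos (by norm_num : (1:ℝ) < 2)]⟩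
  -- bound on f
  have hfbound : ∀ x ∈ Set.Ioo (0:ℝ) 1, |f x| ≤ Real.log 2 := by
    rintro x ⟨hx0, hx1⟩
    have hup : f x ≤ 0 := by
      apply max_le (Real.log_nonpos hx0.le hx1.le)
        (Real.log_nonpos (by linarith) (by linarith))
    have hlow : -Real.log 2 ≤ f x := by
      have h12 : Real.log ((1:ℝ)/2) = -Real.log 2 := by
        rw [one_div, Real.log_inv]
      rcases le_total x (1/2) with h | h
      · have := Real.log_le_log (by norm_num : (0:ℝ) < 1/2) (by linarith : (1:ℝ)/2 ≤ 1 - x)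
        rw [h12] at this
        exact le_trans this (le_max_right _ _)
      · have := Real.log_le_log (by norm_num : (0:ℝ) < 1/2) h
        rw [h12] at this
        exact le_trans this (le_max_left _ _)
    rw [abs_le]
    exact ⟨hlow, by linarith [Real.log_pos (by norm_num : (1:ℝ) < 2)]⟩
  -- key recursion
  have key : ∀ x ∈ Set.Ioo (0:ℝ) 1,
      f x = (1/16) * Real.log (ν x) + (1/16) * f (r x) := by
    rintro x ⟨hx0, hx1⟩
    have h1 : 0 < x ^ 16 := pow_pos hx0 16
    have h2 : 0 < (1 - x) ^ 16 := pow_pos (by linarith) 16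
    have hνx : 0 < ν x := add_pos h1 h2
    have hr1 : Real.log (r x) = 16 * Real.log x - Real.log (ν x) := by
      show Real.log (x ^ 16 / (x ^ 16 + (1 - x) ^ 16)) = _
      rw [Real.log_div (ne_of_gt h1) (ne_of_gt hνx), Real.log_pow]
      push_cast; ring
    have hr2 : 1 - r x = (1 - x) ^ 16 / ν x := by
      show 1 - x ^ 16 / (x ^ 16 + (1 - x) ^ 16) = (1 - x) ^ 16 / (x ^ 16 + (1 - x) ^ 16)
      field_simp
      ring
    have hr2' : Real.log (1 - r x) = 16 * Real.log (1 - x) - Real.log (ν x) := by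
      rw [hr2, Real.log_div (ne_of_gt h2) (ne_of_gt hνx), Real.log_pow]
      push_cast; ring
    have hmax : ∀ a b c : ℝ, max (16 * a - c) (16 * b - c) = 16 * max a b - c := by
      intro a b c
      rcases le_total a b with h | h
      · rw [max_eq_right h, max_eq_right (by linarith)]
      · rw [max_eq_left h, max_eq_left (by linarith)]
    have hfr : f (r x) = 16 * f x - Real.log (ν x) := by
      show max (Real.log (r x)) (Real.log (1 - r x)) = _
      rw [hr1, hr2', hmax]
    rw [hfr]; ring
  -- partial sums
  have hpartial : ∀ n : ℕ,
      ∑ j ∈ Finset.range n, ((1:ℝ)/16) ^ (j + 1) * Real.log (ν (r^[j] α))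
        = f α - ((1:ℝ)/16) ^ n * f (r^[n] α) := by
    intro n
    induction n with
    | zero => simp
    | succ n ih =>
      rw [Finset.sum_range_succ, ih, Function.iterate_succ_apply']
      have hk := key _ (hmem n)
      rw [pow_succ]
      rw [hk]
      ring
  -- summability
  have hgeom : Summable (fun j : ℕ => Real.log 2 * ((1:ℝ)/16) ^ j) :=
    (summable_geometric_of_lt_one (by norm_num) (by norm_num)).mul_left _
  have hle : ∀ j : ℕ, |((1:ℝ)/16) ^ (j + 1) * Real.log (ν (r^[j] α))|
      ≤ Real.log 2 * ((1:ℝ)/16) ^ j := by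
    intro j
    rw [abs_mul, abs_pow, abs_of_nonneg (by norm_num : (0:ℝ) ≤ 1/16)]
    calc ((1:ℝ)/16) ^ (j + 1) * |Real.log (ν (r^[j] α))|
        ≤ ((1:ℝ)/16) ^ (j + 1) * (16 * Real.log 2) := by
          apply mul_le_mul_of_nonneg_left (hνbound _ (hmem j)) (by positivity)
      _ = Real.log 2 * ((1:ℝ)/16) ^ j := by rw [pow_succ]; ring
  have hsummable : Summable (fun j : ℕ => |((1:ℝ)/16) ^ (j + 1) * Real.log (ν (r^[j] α))|) :=
    Summable.of_nonneg_of_le (fun j => abs_nonneg _) hle hgeom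
  refine ⟨hsummable, ?_⟩
  have hsum : Summable (fun j : ℕ => ((1:ℝ)/16) ^ (j + 1) * Real.log (ν (r^[j] α))) :=
    hsummable.of_abs
  have htend1 := hsum.hasSum.tendsto_sum_nat
  have htail : Filter.Tendsto (fun n : ℕ => ((1:ℝ)/16) ^ n * f (r^[n] α))
      Filter.atTop (nhds 0) := by
    have hg0 : Filter.Tendsto (fun n : ℕ => Real.log 2 * ((1:ℝ)/16) ^ n)
        Filter.atTop (nhds 0) := by
      simpa using (tendsto_pow_atTop_nhds_zero_of_lt_one (r := (1:ℝ)/16) (by norm_num) (by norm_num)).const_mul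
        (Real.log 2)
    refine squeeze_zero_norm (fun n => ?_) hg0
    rw [Real.norm_eq_abs, abs_mul, abs_pow, abs_of_nonneg (by norm_num : (0:ℝ) ≤ 1/16)]
    rw [mul_comm]
    exact mul_le_mul_of_nonneg_right (hfbound _ (hmem n)) (by positivity)
  have htend2 : Filter.Tendsto
      (fun n : ℕ => ∑ j ∈ Finset.range n, ((1:ℝ)/16) ^ (j + 1) * Real.log (ν (r^[j] α)))
      Filter.atTop (nhds (f α)) := by
    simp only [hpartial]
    simpa using (tendsto_const_nhds (x := f α)).sub htail
  exact tendsto_nhds_unique htend1 htend2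
end
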